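/- arXiv:1403.1149 — 4 statements merged into one kernel-verified Lean document; each statement's English description precedes it below -/
import Mathlib

section
/- With the notation of the previous statement, suppose additionally that M = ⟨G_i, a_i G_i a_i⁻¹⟩. Then the homomorphism φ_i : L_i → L_{i+1} is surjective. -/
/-!
`Lᵢ₊₁` is generated by `k(M)` and `k'(Mᵢ₊₁) = k'(βᵢ₊₁(M))`. The first lies in the image of `φ` since
`φ ∘ j = k`. For the second it suffices to treat the generators of `M`: for `g ∈ Gᵢ`,
`k'(βᵢ₊₁ g) = k g = φ (j g)`, and
`k'(βᵢ₊₁(a g a⁻¹)) = k'(βᵢ₊₁ a) · k g · k'(βᵢ₊₁ a)⁻¹ = φ (j' (βᵢ g))`.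
-/

theorem MonoidHom.range_le_of_closure_eq_top {G N : Type*} [Group G] [Group N] (f : G →* N)
    {S : Set G} (hS : Subgroup.closure S = ⊤) {H : Subgroup N} (hSH : ∀ x ∈ S, f x ∈ H) :
    f.range ≤ H := by
  rw [MonoidHom.range_eq_map, ← hS, MonoidHom.map_closure, Subgroup.closure_le]
  rintro _ ⟨x, hx, rfl⟩
  exact hSH x hx

theorem MonoidHom.surjective_of_closure_union_range_eq_top {G₁ G₂ L N : Type*} [Group G₁]
    [Group G₂] [Group L] [Group N] {f₁ : G₁ →* N} {f₂ : G₂ →* N}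
    (hgen : Subgroup.closure (Set.range f₁ ∪ Set.range f₂) = ⊤) (φ : L →* N)
    (h₁ : f₁.range ≤ φ.range) (h₂ : f₂.range ≤ φ.range) : Function.Surjective φ := by
  rw [← MonoidHom.range_eq_top, eq_top_iff, ← hgen, Subgroup.closure_le]
  rintro _ (⟨x, rfl⟩ | ⟨x, rfl⟩)
  exacts [h₁ ⟨x, rfl⟩, h₂ ⟨x, rfl⟩]

theorem stmt2_general {M Mi Mi1 Li Li1 : Type} [Group M] [Group Mi] [Group Mi1]
    [Group Li] [Group Li1]
    (Gi : Subgroup M)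
    (a : M)
    (hgenM : Subgroup.closure ((Gi : Set M) ∪ (fun g => a * g * a⁻¹) '' Gi) = ⊤)
    (βi : M ≃* Mi) (βi1 : M ≃* Mi1)
    (j : M →* Li) (j' : Mi →* Li)
    (k : M →* Li1) (k' : Mi1 →* Li1)
    (hagr' : ∀ g ∈ Gi, k g = k' (βi1 g))
    (hgenL : Subgroup.closure (Set.range k ∪ Set.range k') = ⊤)
    (φ : Li →* Li1)
    (hφM : ∀ g : M, φ (j g) = k g)
    (hφMi : ∀ h : Mi, φ (j' h) = k' (βi1 a) * k (βi.symm h) * (k' (βi1 a))⁻¹) :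
    Function.Surjective φ := by
  have hk : k.range ≤ φ.range := by
    rintro _ ⟨g, rfl⟩
    exact ⟨j g, hφM g⟩
  have hconj : ∀ g ∈ Gi, k' (βi1 (a * g * a⁻¹)) = φ (j' (βi g)) := fun g hg => by
    rw [hφMi, MulEquiv.symm_apply_apply, hagr' g hg]
    simp only [map_mul, map_inv]
  have hk'β : (k'.comp βi1.toMonoidHom).range ≤ φ.range := by
    refine MonoidHom.range_le_of_closure_eq_top _ hgenM ?_
    rintro _ (hg | ⟨g, hg, rfl⟩)
    · exact ⟨j _, (hφM _).trans (hagr' _ hg)⟩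
    · exact ⟨j' (βi g), (hconj g hg).symm⟩
  have hk' : k'.range ≤ φ.range := by
    rintro _ ⟨m, rfl⟩
    simpa using hk'β ⟨βi1.symm m, rfl⟩
  exact MonoidHom.surjective_of_closure_union_range_eq_top hgenL φ hk hk'

/-- Surjectivity of `φᵢ : Lᵢ →* Lᵢ₊₁`, assuming `M = ⟨Gᵢ, aᵢ Gᵢ aᵢ⁻¹⟩`.

Setup as before: `Lᵢ = M ∗_{Gᵢ₋₁} Mᵢ` with inclusions `j, j'`, and
`Lᵢ₊₁ = M ∗_{Gᵢ} Mᵢ₊₁` with inclusions `k, k'` (whose ranges generate `Lᵢ₊₁`),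
and `φ` is the homomorphism determined by `φ(g) = g` on `M` and
`φ(h) = βᵢ₊₁(aᵢ) βᵢ⁻¹(h) βᵢ₊₁(aᵢ)⁻¹` on `Mᵢ`. -/
theorem stmt2 {M Mi Mi1 Li Li1 : Type} [Group M] [Group Mi] [Group Mi1]
    [Group Li] [Group Li1]
    (Gi1 Gi : Subgroup M) (hGG : Gi1 ≤ Gi)
    (a : M) (hcent : ∀ g ∈ Gi1, a * g = g * a)
    (hgenM : Subgroup.closure ((Gi : Set M) ∪ (fun g => a * g * a⁻¹) '' Gi) = ⊤)
    (βi : M ≃* Mi) (βi1 : M ≃* Mi1)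
    (j : M →* Li) (j' : Mi →* Li)
    (hagr : ∀ g ∈ Gi1, j g = j' (βi g))
    (k : M →* Li1) (k' : Mi1 →* Li1)
    (hagr' : ∀ g ∈ Gi, k g = k' (βi1 g))
    (hgenL : Subgroup.closure (Set.range k ∪ Set.range k') = ⊤)
    (φ : Li →* Li1)
    (hφM : ∀ g : M, φ (j g) = k g)
    (hφMi : ∀ h : Mi, φ (j' h) = k' (βi1 a) * k (βi.symm h) * (k' (βi1 a))⁻¹) :
    Function.Surjective φ :=
  stmt2_general Gi a hgenM βi βi1 j j' k k' hagr' hgenL φ hφM hφMi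
end

section
/- Let F be a group acting on a simplicial tree S without edge inversions, let v be a vertex of S such that H = St_F(v) is finitely generated and fixes no edge of S. If E ≤ F is a finite subgroup normalized by H, then E ⊆ H. -/
/-!
A finite group acting on a tree without inversions fixes a vertex: the vertices minimizing the
largest distance to an orbit are pairwise at distance at most one (an interior vertex of a longer
geodesic would do strictly better), so they span a vertex or an edge, and an edge cannot be
inverted. The fixed-point set of `E` is therefore a nonempty subtree, and it has a unique vertex
`p` closest to `v`. Since `H` fixes `v` and normalizes `E`, it permutes the fixed points of `E`
isometrically and so fixes `p`, hence every vertex of the geodesic from `v` to `p`. As `H` fixes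
no edge, `p = v`, i.e. `E` fixes `v`.
-/

namespace SimpleGraph

variable {V : Type*} {T : SimpleGraph V} {a b m x y : V}

theorem Walk.IsPath.append {p : T.Walk a m} {q : T.Walk m b} (hp : p.IsPath) (hq : q.IsPath)
    (h : ∀ z ∈ p.support, z ∈ q.support → z = m) : (p.append q).IsPath := by
  rw [Walk.isPath_def, Walk.support_append]
  refine hp.support_nodup.append hq.support_nodup.tail fun z hzp hzq => ?_
  obtain rfl := h z hzp (List.mem_of_mem_tail hzq)
  exact (List.nodup_cons.mp (q.cons_tail_support ▸ hq.support_nodup)).1 hzq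

theorem Connected.dist_map_le {W : Type*} {T' : SimpleGraph W} (hT : T.Connected) (φ : T →g T')
    (u w : V) : T'.dist (φ u) (φ w) ≤ T.dist u w := by
  obtain ⟨p, hp⟩ := hT.exists_walk_length_eq_dist u w
  simpa [hp] using dist_le (p.map φ)

theorem Connected.exists_adj_dist_add_one_eq (hT : T.Connected) (hab : a ≠ b) :
    ∃ m, T.Adj a m ∧ T.dist m b + 1 = T.dist a b := by
  obtain ⟨p, hp⟩ := hT.exists_walk_length_eq_dist a b
  have hnil : ¬p.Nil := Walk.not_nil_of_ne hab
  have hadj := p.adj_snd hnil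
  refine ⟨p.snd, hadj, le_antisymm ?_ ?_⟩
  · have := dist_le p.tail
    have := p.length_tail_add_one hnil
    omega
  · calc T.dist a b ≤ T.dist a p.snd + T.dist p.snd b := hT.dist_triangle
      _ = T.dist p.snd b + 1 := by rw [dist_eq_one_iff_adj.mpr hadj, add_comm]

theorem IsTree.length_eq_dist_of_isPath (hT : T.IsTree) {p : T.Walk a b} (hp : p.IsPath) :
    p.length = T.dist a b := by
  obtain ⟨q, hq, hlen⟩ := hT.connected.exists_path_of_dist a b
  rw [← hlen, (hT.existsUnique_path a b).unique hp hq]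

theorem IsTree.dist_add_dist_of_mem_support (hT : T.IsTree) {p : T.Walk a b} (hp : p.IsPath)
    (hx : x ∈ p.support) : T.dist a x + T.dist x b = T.dist a b := by
  classical
  rw [← hT.length_eq_dist_of_isPath hp, ← hT.length_eq_dist_of_isPath (hp.takeUntil hx),
    ← hT.length_eq_dist_of_isPath (hp.dropUntil hx), ← Walk.length_append, Walk.take_spec]

theorem IsTree.mem_support_of_dist_add_dist (hT : T.IsTree)
    (hx : T.dist a x + T.dist x b = T.dist a b) {p : T.Walk a b} (hp : p.IsPath) :
    x ∈ p.support := by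
  obtain ⟨p₁, h₁⟩ := hT.connected.exists_walk_length_eq_dist a x
  obtain ⟨p₂, h₂⟩ := hT.connected.exists_walk_length_eq_dist x b
  have hq : (p₁.append p₂).IsPath :=
    (p₁.append p₂).isPath_of_length_eq_dist (by rw [Walk.length_append, h₁, h₂, hx])
  rw [(hT.existsUnique_path a b).unique hp hq, Walk.mem_support_append_iff]
  exact Or.inl p₁.end_mem_support

theorem IsTree.dist_add_dist_of_le (hT : T.IsTree) (hx : T.dist a x + T.dist x b = T.dist a b)
    (hy : T.dist a y + T.dist y b = T.dist a b) (hle : T.dist a x ≤ T.dist a y) :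
    T.dist a x + T.dist x y = T.dist a y := by
  classical
  obtain ⟨p, hp, -⟩ := hT.connected.exists_path_of_dist a b
  have hxp := hT.mem_support_of_dist_add_dist hx hp
  have hyp := hT.mem_support_of_dist_add_dist hy hp
  have hcomm : T.dist y x = T.dist x y := dist_comm
  rw [← p.take_spec hxp, Walk.mem_support_append_iff] at hyp
  rcases hyp with hy₁ | hy₂
  · have := hT.dist_add_dist_of_mem_support (hp.takeUntil hxp) hy₁
    omega
  · have := hT.dist_add_dist_of_mem_support (hp.dropUntil hxp) hy₂
    omega

theorem IsTree.eq_of_dist_eq (hT : T.IsTree) (hx : T.dist a x + T.dist x b = T.dist a b)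
    (hy : T.dist a y + T.dist y b = T.dist a b) (hxy : T.dist a x = T.dist a y) : x = y := by
  have := hT.dist_add_dist_of_le hx hy hxy.le
  exact hT.connected.dist_eq_zero_iff.mp (by omega)

theorem IsTree.apply_eq_self_of_dist_add_dist (hT : T.IsTree) {f : V → V}
    (hf : ∀ u w, T.dist (f u) (f w) = T.dist u w) (ha : f a = a) (hb : f b = b)
    (hx : T.dist a x + T.dist x b = T.dist a b) : f x = x := by
  have hfa : T.dist a (f x) = T.dist a x := by rw [← hf a x, ha]
  have hfb : T.dist (f x) b = T.dist x b := by rw [← hf x b, hb]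
  exact hT.eq_of_dist_eq (by rwa [hfa, hfb]) hx hfa

theorem IsTree.dist_add_dist_of_forall_mem_support (hT : T.IsTree) {p : T.Walk a m}
    {q : T.Walk m b} (hp : p.IsPath) (hq : q.IsPath) (h : ∀ z ∈ p.support, z ∈ q.support → z = m) :
    T.dist a m + T.dist m b = T.dist a b := by
  rw [← hT.length_eq_dist_of_isPath hp, ← hT.length_eq_dist_of_isPath hq, ← Walk.length_append,
    hT.length_eq_dist_of_isPath (hp.append hq h)]

theorem IsTree.exists_median (hT : T.IsTree) (a b c : V) :
    ∃ m, T.dist a m + T.dist m b = T.dist a b ∧ T.dist a m + T.dist m c = T.dist a c ∧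
      T.dist b m + T.dist m c = T.dist b c := by
  classical
  obtain ⟨r, hr, -⟩ := hT.connected.exists_path_of_dist b c
  obtain ⟨m, hm, hmin⟩ := r.support.toFinset.exists_min_image (T.dist a) ⟨b, by simp⟩
  rw [List.mem_toFinset] at hm
  obtain ⟨p, hp, -⟩ := hT.connected.exists_path_of_dist a m
  have hmeet : ∀ z ∈ p.support, z ∈ r.support → z = m := fun z hzp hzr => by
    have := hT.dist_add_dist_of_mem_support hp hzp
    have := hmin z (List.mem_toFinset.mpr hzr)
    exact hT.connected.dist_eq_zero_iff.mp (by omega)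
  refine ⟨m, ?_, ?_, hT.dist_add_dist_of_mem_support hr hm⟩
  · refine hT.dist_add_dist_of_forall_mem_support hp (hr.takeUntil hm).reverse fun z hzp hzq => ?_
    rw [Walk.support_reverse, List.mem_reverse] at hzq
    exact hmeet z hzp (r.support_takeUntil_subset_support hm hzq)
  · exact hT.dist_add_dist_of_forall_mem_support hp (hr.dropUntil hm) fun z hzp hzq =>
      hmeet z hzp (r.support_dropUntil_subset_support hm hzq)

theorem IsTree.exists_forall_dist_add_one_le_max (hT : T.IsTree) (hxy : 2 ≤ T.dist x y) :
    ∃ m, ∀ a, T.dist a m + 1 ≤ max (T.dist a x) (T.dist a y) := by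
  have hne : x ≠ y := by rintro rfl; simp at hxy
  obtain ⟨m, hxm, hmy⟩ := hT.connected.exists_adj_dist_add_one_eq hne
  replace hxm : T.dist x m = 1 := dist_eq_one_iff_adj.mpr hxm
  refine ⟨m, fun a => ?_⟩
  obtain ⟨p, hxpy, hxpa, hypa⟩ := hT.exists_median x y a
  have htri : T.dist a m ≤ T.dist a p + T.dist p m := hT.connected.dist_triangle
  have h₁ : T.dist a p = T.dist p a := dist_comm
  have h₂ : T.dist a x = T.dist x a := dist_comm
  have h₃ : T.dist a y = T.dist y a := dist_comm
  rcases Nat.eq_zero_or_pos (T.dist x p) with hxp | hxp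
  · obtain rfl : x = p := hT.connected.dist_eq_zero_iff.mp hxp
    have h₄ : T.dist y x = T.dist x y := dist_comm
    have h₅ : T.dist x m = T.dist m x := dist_comm
    omega
  · have := hT.dist_add_dist_of_le (x := m) (by omega) hxpy (by omega)
    have h₄ : T.dist p m = T.dist m p := dist_comm
    omega

theorem IsTree.dist_le_one_of_isMinOn {ι : Type*} [Fintype ι] [Nonempty ι] (hT : T.IsTree)
    (f : ι → V) (hx : IsMinOn (fun z => Finset.univ.sup fun i => T.dist (f i) z) Set.univ x)
    (hy : IsMinOn (fun z => Finset.univ.sup fun i => T.dist (f i) z) Set.univ y) :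
    T.dist x y ≤ 1 := by
  by_contra! hxy
  obtain ⟨m, hm⟩ := hT.exists_forall_dist_add_one_le_max hxy
  have hxm := isMinOn_iff.mp hx m trivial
  have hym := isMinOn_iff.mp hy m trivial
  obtain ⟨i, -, hi⟩ := Finset.exists_mem_eq_sup Finset.univ Finset.univ_nonempty
    fun i => T.dist (f i) m
  have hix := Finset.le_sup (f := fun i => T.dist (f i) x) (Finset.mem_univ i)
  have hiy := Finset.le_sup (f := fun i => T.dist (f i) y) (Finset.mem_univ i)
  have := hm (f i)
  omega

theorem IsTree.eq_of_isMinOn_dist (hT : T.IsTree) {S : Set V}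
    (hS : ∀ a ∈ S, ∀ b ∈ S, ∀ x, T.dist a x + T.dist x b = T.dist a b → x ∈ S) {v p q : V}
    (hp : p ∈ S) (hq : q ∈ S) (hpmin : IsMinOn (T.dist v) S p) (hqmin : IsMinOn (T.dist v) S q) :
    p = q := by
  obtain ⟨m, hpq, hpv, hqv⟩ := hT.exists_median p q v
  have hm : m ∈ S := hS p hp q hq m hpq
  have hpm := isMinOn_iff.mp hpmin m hm
  have hqm := isMinOn_iff.mp hqmin m hm
  have h₁ : T.dist v p = T.dist p v := dist_comm
  have h₂ : T.dist v q = T.dist q v := dist_comm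
  have h₃ : T.dist v m = T.dist m v := dist_comm
  have hp' : p = m := hT.connected.dist_eq_zero_iff.mp (by omega)
  have hq' : q = m := hT.connected.dist_eq_zero_iff.mp (by omega)
  exact hp'.trans hq'.symm

section Action

variable {G : Type*} [Group G] (ρ : G →* Equiv.Perm V)

theorem Connected.dist_apply_apply (hT : T.Connected)
    (hadj : ∀ g u w, T.Adj u w → T.Adj (ρ g u) (ρ g w)) (g : G) (u w : V) :
    T.dist (ρ g u) (ρ g w) = T.dist u w := by
  have hle : ∀ g u w, T.dist (ρ g u) (ρ g w) ≤ T.dist u w :=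
    fun g => hT.dist_map_le ⟨ρ g, hadj g _ _⟩
  refine (hle g u w).antisymm ?_
  simpa using hle g⁻¹ (ρ g u) (ρ g w)

theorem IsTree.exists_fixed_point_of_finite [Finite G] (hT : T.IsTree)
    (hiso : ∀ g u w, T.dist (ρ g u) (ρ g w) = T.dist u w)
    (hninv : ∀ g u w, T.Adj u w → ¬(ρ g u = w ∧ ρ g w = u)) :
    ∃ p, ∀ g, ρ g p = p := by
  have := Fintype.ofFinite G
  obtain ⟨v⟩ := hT.connected.nonempty
  have : Nonempty V := ⟨v⟩
  set r : V → ℕ := fun z => Finset.univ.sup fun g => T.dist (ρ g v) z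
  have hr : ∀ g z, r (ρ g z) ≤ r z := fun g z => Finset.sup_le fun k _ =>
    calc T.dist (ρ k v) (ρ g z) = T.dist (ρ (g⁻¹ * k) v) z := by
          rw [← hiso g (ρ (g⁻¹ * k) v) z, ← Equiv.Perm.mul_apply, ← map_mul, mul_inv_cancel_left]
      _ ≤ r z := Finset.le_sup (f := fun g => T.dist (ρ g v) z) (Finset.mem_univ _)
  set c := Function.argmin r
  have hc : ∀ g, IsMinOn r Set.univ (ρ g c) := fun g => isMinOn_iff.mpr fun z _ =>
    (hr g c).trans (Function.argmin_le r z)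
  have hclose : ∀ g h, ρ g c ≠ ρ h c → T.Adj (ρ g c) (ρ h c) := fun g h hgh =>
    dist_eq_one_iff_adj.mp <| le_antisymm (hT.dist_le_one_of_isMinOn (fun g => ρ g v) (hc g) (hc h))
      (hT.connected.pos_dist_of_ne hgh)
  have hρ : ∀ g h, ρ (g * h) c = ρ g (ρ h c) := fun g h => by rw [map_mul, Equiv.Perm.mul_apply]
  -- `c`, `g c`, `g (g c)` are pairwise adjacent or equal; a tree has no triangle, so `g` would
  -- swap the edge `c, g c`.
  refine ⟨c, fun g => by_contra fun hg => ?_⟩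
  have hc₁ : T.Adj c (ρ g c) := by
    simpa using hclose 1 g (by simpa only [map_one, Equiv.Perm.one_apply] using Ne.symm hg)
  refine hninv g c (ρ g c) hc₁ ⟨rfl, by_contra fun hg₂ => ?_⟩
  have hc₂ : T.Adj c (ρ g (ρ g c)) := by
    simpa [hρ] using hclose 1 (g * g) (by simpa [hρ] using Ne.symm hg₂)
  have hc₁₂ : T.Adj (ρ g c) (ρ g (ρ g c)) := by
    simpa [hρ] using hclose g (g * g) (by rw [hρ]; exact fun h => hg ((ρ g).injective h).symm)
  exact hT.dist_ne_of_adj c hc₁₂ (by rw [dist_eq_one_iff_adj.mpr hc₁, dist_eq_one_iff_adj.mpr hc₂])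

theorem IsTree.exists_fixed_point_of_normalizes (hT : T.IsTree)
    (hiso : ∀ g u w, T.dist (ρ g u) (ρ g w) = T.dist u w) {E H : Subgroup G}
    (hE : ∃ p, ∀ e ∈ E, ρ e p = p) {v : V} (hHv : ∀ h ∈ H, ρ h v = v)
    (hnorm : ∀ h ∈ H, ∀ e ∈ E, h * e * h⁻¹ ∈ E) :
    ∃ p, (∀ e ∈ E, ρ e p = p) ∧ ∀ h ∈ H, ρ h p = p := by
  set S : Set V := {p | ∀ e ∈ E, ρ e p = p}
  have hS : ∀ a ∈ S, ∀ b ∈ S, ∀ x, T.dist a x + T.dist x b = T.dist a b → x ∈ S :=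
    fun a ha b hb x hx e he => hT.apply_eq_self_of_dist_add_dist (hiso e) (ha e he) (hb e he) hx
  set p := Function.argminOn (T.dist v) S hE
  have hpS : p ∈ S := Function.argminOn_mem _ _ _
  have hpmin : IsMinOn (T.dist v) S p := isMinOn_iff.mpr fun q hq => Function.argminOn_le _ _ hq
  refine ⟨p, hpS, fun h hh => (hT.eq_of_isMinOn_dist hS hpS ?_ hpmin ?_).symm⟩
  · intro e he
    have hconj : h⁻¹ * e * h ∈ E := by simpa using hnorm h⁻¹ (H.inv_mem hh) e he
    simpa using congrArg (ρ h) (hpS _ hconj)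
  · have hd : T.dist v (ρ h p) = T.dist v p := by rw [← hiso h v p, hHv h hh]
    exact isMinOn_iff.mpr fun q hq => hd ▸ isMinOn_iff.mp hpmin q hq

end Action

end SimpleGraph

theorem stmt8_general {F V : Type} [Group F] (T : SimpleGraph V) (hT : T.IsTree)
    (ρ : F →* Equiv.Perm V)
    (hadj : ∀ (g : F) (u w : V), T.Adj u w → T.Adj (ρ g u) (ρ g w))
    (hninv : ∀ (g : F) (u w : V), T.Adj u w → ¬(ρ g u = w ∧ ρ g w = u))
    (v : V) (H : Subgroup F) (hH : (H : Set F) = {g : F | ρ g v = v})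
    (hnoedge : ∀ u w : V, T.Adj u w → ∃ h ∈ H, ¬(ρ h u = u ∧ ρ h w = w))
    (E : Subgroup F) (hEfin : (E : Set F).Finite)
    (hnorm : ∀ h ∈ H, ∀ e ∈ E, h * e * h⁻¹ ∈ E) :
    (E : Set F) ⊆ (H : Set F) := by
  have hiso := hT.connected.dist_apply_apply ρ hadj
  have hmemH : ∀ g, g ∈ H ↔ ρ g v = v := fun g => Set.ext_iff.mp hH g
  have : Finite E := hEfin.to_subtype
  obtain ⟨p₀, hp₀⟩ := hT.exists_fixed_point_of_finite (ρ.comp E.subtype) (fun e => hiso e)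
    (fun e => hninv e)
  obtain ⟨p, hpE, hpH⟩ := hT.exists_fixed_point_of_normalizes ρ hiso
    ⟨p₀, fun e he => hp₀ ⟨e, he⟩⟩ (fun h => (hmemH h).mp) hnorm
  obtain rfl : v = p := by
    by_contra hvp
    obtain ⟨m, hvm, hmp⟩ := hT.connected.exists_adj_dist_add_one_eq hvp
    obtain ⟨h, hh, hmoved⟩ := hnoedge v m hvm
    have hvm : T.dist v m = 1 := SimpleGraph.dist_eq_one_iff_adj.mpr hvm
    exact hmoved ⟨(hmemH h).mp hh, hT.apply_eq_self_of_dist_add_dist (hiso h) ((hmemH h).mp hh)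
      (hpH h hh) (by omega)⟩
  exact fun e he => (hmemH e).mpr (hpE e he)

/-- Let `F` act on a simplicial tree `S` without edge inversions, and let `v`
be a vertex whose stabilizer `H` is finitely generated and fixes no edge of
`S`.  If `E ≤ F` is a finite subgroup normalized by `H`, then `E ⊆ H`. -/
theorem stmt8 {F V : Type} [Group F] (T : SimpleGraph V) (hT : T.IsTree)
    (ρ : F →* Equiv.Perm V)
    (hadj : ∀ (g : F) (u w : V), T.Adj u w → T.Adj (ρ g u) (ρ g w))
    (hninv : ∀ (g : F) (u w : V), T.Adj u w → ¬(ρ g u = w ∧ ρ g w = u))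
    (v : V) (H : Subgroup F) (hH : (H : Set F) = {g : F | ρ g v = v})
    (hfg : H.FG)
    (hnoedge : ∀ u w : V, T.Adj u w → ∃ h ∈ H, ¬(ρ h u = u ∧ ρ h w = w))
    (E : Subgroup F) (hEfin : (E : Set F).Finite)
    (hnorm : ∀ h ∈ H, ∀ e ∈ E, h * e * h⁻¹ ∈ E) :
    (E : Set F) ⊆ (H : Set F) :=
  stmt8_general T hT ρ hadj hninv v H hH hnoedge E hEfin hnorm
end

section
/- Let M be a group with subgroups G_{i-1} ≤ G_i and an element a ∈ M centralizing G_{i-1}. Suppose that for every c ∈ G_i \ G_{i-1}, the subgroup ⟨G_i, (a c a⁻¹) G_i (a c a⁻¹)⁻¹⟩ is not equal to G_i. Then G_i ∩ a G_i a⁻¹ = G_{i-1}. -/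
theorem Subgroup.closure_union_conj_image_eq_of_mem {G : Type*} [Group G] (H : Subgroup G)
    {x : G} (hx : x ∈ H) :
    Subgroup.closure ((H : Set G) ∪ (fun g => x * g * x⁻¹) '' H) = H := by
  refine le_antisymm ?_ (Set.subset_union_left.trans Subgroup.subset_closure)
  rw [Subgroup.closure_le]
  rintro y (hy | ⟨g, hg, rfl⟩)
  · exact hy
  · exact mul_mem (mul_mem hx hg) (inv_mem hx)

/-- Let `Gᵢ₋₁ ≤ Gᵢ ≤ M` with `a ∈ M` centralizing `Gᵢ₋₁`.  If for every
`c ∈ Gᵢ \ Gᵢ₋₁` the subgroup `⟨Gᵢ, (aca⁻¹) Gᵢ (aca⁻¹)⁻¹⟩` is different from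
`Gᵢ`, then `Gᵢ ∩ a Gᵢ a⁻¹ = Gᵢ₋₁`. -/
theorem stmt13 {M : Type*} [Group M] (Gi1 Gi : Subgroup M) (hle : Gi1 ≤ Gi)
    (a : M) (hcent : ∀ g ∈ Gi1, a * g = g * a)
    (hyp : ∀ c ∈ Gi, c ∉ Gi1 →
      Subgroup.closure ((Gi : Set M) ∪
        (fun g => (a * c * a⁻¹) * g * (a * c * a⁻¹)⁻¹) '' Gi) ≠ Gi) :
    (Gi : Set M) ∩ ((fun g => a * g * a⁻¹) '' Gi) = (Gi1 : Set M) := by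
  have conj_eq {g : M} (hg : g ∈ Gi1) : a * g * a⁻¹ = g := Commute.mul_inv_cancel (hcent g hg)
  ext x
  constructor
  · rintro ⟨hx, c, hc, rfl⟩
    -- Conjugation by `x = a c a⁻¹ ∈ Gᵢ` preserves `Gᵢ`, so `hyp` forces `c ∈ Gᵢ₋₁`.
    have hc1 : c ∈ Gi1 := by
      by_contra hc1
      exact hyp c hc hc1 (Gi.closure_union_conj_image_eq_of_mem hx)
    show a * c * a⁻¹ ∈ Gi1
    rwa [conj_eq hc1]
  · intro hx
    exact ⟨hle hx, x, hle hx, conj_eq hx⟩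
end

section
/- Thompson's group V is generated by the pointwise stabilizer of [0, 1/2^{i+1}) together with the pointwise stabilizer of [1/2^{i+1}, 1/2^i), for every i ≥ 1. -/
/-- A real number is dyadic rational. -/
def IsDyadic (x : ℝ) : Prop := ∃ (z : ℤ) (n : ℕ), x = (z : ℝ) / 2 ^ n

/-- The unit interval `[0,1)`. -/
abbrev UnitIco : Type := ↥(Set.Ico (0 : ℝ) 1)

/-- A permutation of `[0,1)` belongs to Thompson's group `V` if it is piecewise
linear with finitely many pieces, with dyadic breakpoints, slopes powers of `2`
and dyadic offsets (hence right continuous on each piece and preserving dyadic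
rationals). -/
def IsThompsonV (f : Equiv.Perm UnitIco) : Prop :=
  ∃ (n : ℕ) (x : Fin (n + 1) → ℝ) (m : Fin n → ℤ) (c : Fin n → ℝ),
    x 0 = 0 ∧ x (Fin.last n) = 1 ∧ StrictMono x ∧
    (∀ k, IsDyadic (x k)) ∧ (∀ k, IsDyadic (c k)) ∧
    ∀ (k : Fin n) (t : UnitIco), x k.castSucc ≤ (t : ℝ) → (t : ℝ) < x k.succ →
      ((f t : ℝ)) = (2 : ℝ) ^ (m k) * (t : ℝ) + c k

/-- The function underlying the element `aᵢ ∈ V`, which swaps the intervals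
`[0, 1/2^(i+1))` and `[1/2^(i+1), 1/2^i)` by translation and is the identity on
`[1/2^i, 1)`. -/
noncomputable def aiFun (i : ℕ) (x : ℝ) : ℝ :=
  if x < 1 / 2 ^ (i + 1) then x + 1 / 2 ^ (i + 1)
  else if x < 1 / 2 ^ i then x - 1 / 2 ^ (i + 1)
  else x

/-- The pointwise stabilizer in `V` of the interval `[0, 1/2^(i+1))`,
as a subset of the permutations of `[0,1)`. -/
def GThompson (i : ℕ) : Set (Equiv.Perm UnitIco) :=
  {f | IsThompsonV f ∧ ∀ t : UnitIco, (t : ℝ) < 1 / 2 ^ (i + 1) → f t = t}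

/-!
Write `A = [0, 2⁻⁽ⁱ⁺¹⁾)`, `B = [2⁻⁽ⁱ⁺¹⁾, 2⁻ⁱ)` and `H` for the subgroup generated by their
pointwise stabilizers in `V`. The elements of `V` are exactly the permutations mapping each
interval of some uniform dyadic grid affinely onto a dyadic interval; in particular `H ≤ V`.

Every swap of two disjoint dyadic intervals `J`, `K` lies in `H`. It fixes `A` pointwise if `J`
and `K` both avoid `A`, and `B` if both avoid `B`. If `J ⊆ A` and `K ⊆ B`, conjugating by the
swap of `K` with `[1/2, 1)`, which avoids `A ∪ B` because `i ≥ 1`, turns it into the swap of `J`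
with `[1/2, 1)`, which fixes `B`. If `J ⊇ A ∪ B`, the swap is the product of the swaps of the
left halves and of the right halves of `J` and `K`; the latter avoids `A`, and the former is
handled recursively down to `J = A ∪ B`, whose halves are `A` and `B`.

Products of swaps move any dyadic partition of `[0, 1)` into `r + 1` pieces onto the comb
partition `[0, 1/2), [1/2, 3/4), …`, and realize every permutation of its pieces. Moving both the
grid partition of `f ∈ V` and its image under `f` onto the comb writes `f = w⁻¹ h v` with
`v, w, h ∈ H`.
-/

lemma div_two_pow_eq_of_le {q p : ℕ} (h : q ≤ p) (a : ℝ) :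
    a / 2 ^ q = a * 2 ^ (p - q) / 2 ^ p := by
  rw [← Nat.sub_add_cancel h, pow_add, Nat.add_sub_cancel]
  field_simp

/-- The standard dyadic interval `[index / 2 ^ level, (index + 1) / 2 ^ level) ⊆ [0, 1)`. -/
@[ext]
structure DyadicInterval : Type where
  level : ℕ
  index : ℕ
  index_lt : index < 2 ^ level

namespace DyadicInterval

noncomputable def left (I : DyadicInterval) : ℝ := I.index / 2 ^ I.level

noncomputable def right (I : DyadicInterval) : ℝ := (I.index + 1) / 2 ^ I.level

lemma left_nonneg (I : DyadicInterval) : 0 ≤ I.left := by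
  unfold left; positivity

lemma right_sub_left (I : DyadicInterval) : I.right - I.left = 2 ^ (-(I.level : ℤ)) := by
  rw [zpow_neg, zpow_natCast, left, right, ← sub_div, add_sub_cancel_left, one_div]

lemma left_lt_right (I : DyadicInterval) : I.left < I.right := by
  have := I.right_sub_left
  have : (0 : ℝ) < 2 ^ (-(I.level : ℤ)) := by positivity
  linarith

lemma right_le_one (I : DyadicInterval) : I.right ≤ 1 := by
  rw [right, div_le_one (by positivity)]
  exact_mod_cast I.index_lt

lemma left_lt_one (I : DyadicInterval) : I.left < 1 :=
  I.left_lt_right.trans_le I.right_le_one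

lemma ext_of_left_right {I J : DyadicInterval} (hl : I.left = J.left) (hr : I.right = J.right) :
    I = J := by
  have hlevel : I.level = J.level := by
    have h := I.right_sub_left
    rw [hl, hr, J.right_sub_left] at h
    have := zpow_right_injective₀ (by norm_num : (0 : ℝ) < 2) (by norm_num) h
    omega
  refine DyadicInterval.ext hlevel ?_
  rw [left, left, hlevel, div_left_inj' (by positivity)] at hl
  exact_mod_cast hl

instance : SetLike DyadicInterval ℝ where
  coe I := Set.Ico I.left I.right
  coe_injective I J h := by
    obtain ⟨hl, hr⟩ := (Set.Ico_eq_Ico_iff (Or.inl I.left_lt_right)).1 h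
    exact ext_of_left_right hl hr

instance : PartialOrder DyadicInterval := .ofSetLike DyadicInterval ℝ

variable {I J K D : DyadicInterval} {x : ℝ}

lemma coe_def (I : DyadicInterval) : (I : Set ℝ) = Set.Ico I.left I.right := rfl

lemma mem_def : x ∈ I ↔ I.left ≤ x ∧ x < I.right := Iff.rfl

lemma left_mem (I : DyadicInterval) : I.left ∈ I := ⟨le_rfl, I.left_lt_right⟩

lemma le_iff : I ≤ J ↔ J.left ≤ I.left ∧ I.right ≤ J.right := by
  rw [← SetLike.coe_subset_coe, coe_def, coe_def, Set.Ico_subset_Ico_iff I.left_lt_right]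

lemma disjoint_iff : Disjoint (I : Set ℝ) J ↔ I.right ≤ J.left ∨ J.right ≤ I.left := by
  have := I.left_lt_right
  have := J.left_lt_right
  rw [coe_def, coe_def, Set.Ico_disjoint_Ico, min_le_iff, le_max_iff, le_max_iff]
  constructor
  · rintro ((h | h) | (h | h)) <;> first | exact Or.inl h | exact Or.inr h | linarith
  · rintro (h | h)
    · exact Or.inl (Or.inr h)
    · exact Or.inr (Or.inl h)

instance : OrderTop DyadicInterval where
  top := ⟨0, 0, one_pos⟩
  le_top I :=
    le_iff.2 ⟨by simpa [left] using I.left_nonneg, by simpa [right] using I.right_le_one⟩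

@[simp] lemma top_level : (⊤ : DyadicInterval).level = 0 := rfl

@[simp] lemma top_index : (⊤ : DyadicInterval).index = 0 := rfl

lemma mem_top : x ∈ (⊤ : DyadicInterval) ↔ x ∈ Set.Ico (0 : ℝ) 1 := by
  simp [mem_def, left, right]

lemma mem_Ico (hx : x ∈ I) : x ∈ Set.Ico (0 : ℝ) 1 :=
  mem_top.1 (le_top (a := I) hx)

lemma level_le_of_le (h : I ≤ J) : J.level ≤ I.level := by
  have hlen : I.right - I.left ≤ J.right - J.left := by
    have := le_iff.1 h
    linarith
  rw [right_sub_left, right_sub_left,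
    zpow_le_zpow_iff_right₀ (by norm_num : (1 : ℝ) < 2)] at hlen
  omega

lemma le_iff_nat : I ≤ J ↔ J.level ≤ I.level ∧ J.index * 2 ^ (I.level - J.level) ≤ I.index ∧
    I.index + 1 ≤ (J.index + 1) * 2 ^ (I.level - J.level) := by
  have key : J.level ≤ I.level → (I ≤ J ↔ J.index * 2 ^ (I.level - J.level) ≤ I.index ∧
      I.index + 1 ≤ (J.index + 1) * 2 ^ (I.level - J.level)) := fun hl => by
    rw [le_iff, left, left, right, right, div_two_pow_eq_of_le hl (J.index : ℝ),
      div_two_pow_eq_of_le hl ((J.index : ℝ) + 1), div_le_div_iff_of_pos_right (by positivity),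
      div_le_div_iff_of_pos_right (by positivity)]
    norm_cast
  exact ⟨fun h => ⟨level_le_of_le h, (key (level_le_of_le h)).1 h⟩,
    fun ⟨hl, h⟩ => (key hl).2 h⟩

lemma le_or_disjoint (h : J.level ≤ I.level) : I ≤ J ∨ Disjoint (I : Set ℝ) J := by
  set d := I.level - J.level
  have hd : 0 < 2 ^ d := by positivity
  have hlt := Nat.lt_mul_div_succ I.index hd
  have hle := Nat.div_mul_le_self I.index (2 ^ d)
  rcases lt_trichotomy (I.index / 2 ^ d) J.index with hq | hq | hq
  · right
    refine disjoint_iff.2 (Or.inl ?_)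
    rw [right, left, div_two_pow_eq_of_le h (J.index : ℝ),
      div_le_div_iff_of_pos_right (by positivity)]
    have : I.index + 1 ≤ J.index * 2 ^ d := by nlinarith
    exact_mod_cast this
  · left
    rw [le_iff_nat, ← hq]
    exact ⟨h, hle, Nat.succ_le_of_lt (by rw [mul_comm]; exact hlt)⟩
  · right
    refine disjoint_iff.2 (Or.inr ?_)
    rw [right, left, div_two_pow_eq_of_le h ((J.index : ℝ) + 1),
      div_le_div_iff_of_pos_right (by positivity)]
    have : (J.index + 1) * 2 ^ d ≤ I.index := by nlinarith
    exact_mod_cast this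

lemma eq_of_le_of_level_le (h : I ≤ J) (hl : I.level ≤ J.level) : I = J := by
  obtain ⟨hl', h1, h2⟩ := le_iff_nat.1 h
  have hlevel : I.level = J.level := le_antisymm hl hl'
  rw [hlevel, Nat.sub_self, pow_zero, mul_one] at h1 h2
  exact DyadicInterval.ext hlevel (by omega)

lemma level_lt_of_lt (h : I < J) : J.level < I.level :=
  lt_of_le_of_ne (level_le_of_le h.le) fun hl => h.ne (eq_of_le_of_level_le h.le hl.ge)

def leftHalf (I : DyadicInterval) : DyadicInterval :=
  ⟨I.level + 1, 2 * I.index, by have := I.index_lt; rw [pow_succ]; omega⟩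

def rightHalf (I : DyadicInterval) : DyadicInterval :=
  ⟨I.level + 1, 2 * I.index + 1, by have := I.index_lt; rw [pow_succ]; omega⟩

lemma leftHalf_left (I : DyadicInterval) : I.leftHalf.left = I.left := by
  simp only [leftHalf, left]
  push_cast
  rw [pow_succ]
  field_simp

lemma leftHalf_right (I : DyadicInterval) : I.leftHalf.right = I.rightHalf.left := by
  simp only [leftHalf, rightHalf, left, right]
  push_cast
  ring

lemma rightHalf_right (I : DyadicInterval) : I.rightHalf.right = I.right := by
  simp only [rightHalf, right]
  push_cast
  rw [pow_succ]
  field_simp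
  ring

lemma leftHalf_le (I : DyadicInterval) : I.leftHalf ≤ I := by
  refine le_iff.2 ⟨(leftHalf_left I).ge, ?_⟩
  rw [leftHalf_right, ← rightHalf_right I]
  exact I.rightHalf.left_lt_right.le

lemma rightHalf_le (I : DyadicInterval) : I.rightHalf ≤ I := by
  refine le_iff.2 ⟨?_, (rightHalf_right I).le⟩
  rw [← leftHalf_right, ← leftHalf_left I]
  exact I.leftHalf.left_lt_right.le

lemma disjoint_leftHalf_rightHalf (I : DyadicInterval) :
    Disjoint (I.leftHalf : Set ℝ) I.rightHalf :=
  disjoint_iff.2 (Or.inl (leftHalf_right I).le)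

lemma mem_leftHalf_or_mem_rightHalf (hx : x ∈ I) : x ∈ I.leftHalf ∨ x ∈ I.rightHalf := by
  rcases lt_or_ge x I.rightHalf.left with h | h
  · left
    rw [mem_def, leftHalf_left, leftHalf_right]
    exact ⟨hx.1, h⟩
  · right
    rw [mem_def, rightHalf_right]
    exact ⟨h, hx.2⟩

lemma le_rightHalf_of_disjoint_leftHalf (hJ : J ≤ I) (hd : Disjoint (J : Set ℝ) I.leftHalf) :
    J ≤ I.rightHalf := by
  have hJl : J.left ∈ I.rightHalf := (mem_leftHalf_or_mem_rightHalf (hJ J.left_mem)).resolve_left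
    (hd.notMem_of_mem_left J.left_mem)
  rw [le_iff, rightHalf_right]
  exact ⟨hJl.1, (le_iff.1 hJ).2⟩

lemma le_leftHalf_or_le_rightHalf (h : J < I) : J ≤ I.leftHalf ∨ J ≤ I.rightHalf :=
  (le_or_disjoint (J := I.leftHalf) (level_lt_of_lt h)).imp_right
    (le_rightHalf_of_disjoint_leftHalf h.le)

noncomputable def rescale (I K : DyadicInterval) (x : ℝ) : ℝ :=
  2 ^ ((I.level : ℤ) - K.level) * (x - I.left) + K.left

lemma rescale_rescale (I J K : DyadicInterval) (x : ℝ) :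
    rescale J K (rescale I J x) = rescale I K x := by
  have h : (2 : ℝ) ^ ((J.level : ℤ) - K.level) * 2 ^ ((I.level : ℤ) - J.level) =
      2 ^ ((I.level : ℤ) - K.level) := by
    rw [← zpow_add₀ two_ne_zero]
    ring_nf
  unfold rescale
  linear_combination (x - I.left) * h

lemma rescale_self (I : DyadicInterval) (x : ℝ) : rescale I I x = x := by
  simp [rescale]

lemma rescale_rescale_self (I K : DyadicInterval) (x : ℝ) : rescale K I (rescale I K x) = x := by
  rw [rescale_rescale, rescale_self]

lemma rescale_mem (K : DyadicInterval) (hx : x ∈ I) : rescale I K x ∈ K := by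
  have hs : (0 : ℝ) < 2 ^ ((I.level : ℤ) - K.level) := by positivity
  have hlen : (2 : ℝ) ^ ((I.level : ℤ) - K.level) * (I.right - I.left) = K.right - K.left := by
    rw [right_sub_left, right_sub_left, ← zpow_add₀ two_ne_zero]
    ring_nf
  have h1 := hx.1
  have h2 := hx.2
  rw [mem_def, rescale]
  constructor <;> nlinarith

/-- The image of `J ≤ I` under `rescale I K`. -/
def rescaleImage (I K J : DyadicInterval) (h : J ≤ I) : DyadicInterval where
  level := K.level + (J.level - I.level)
  index := K.index * 2 ^ (J.level - I.level) + (J.index - I.index * 2 ^ (J.level - I.level))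
  index_lt := by
    obtain ⟨-, h1, h2⟩ := le_iff_nat.1 h
    have hK : (K.index + 1) * 2 ^ (J.level - I.level) ≤ 2 ^ K.level * 2 ^ (J.level - I.level) :=
      Nat.mul_le_mul_right _ K.index_lt
    rw [pow_add]
    rw [add_mul, one_mul] at h2 hK
    omega

lemma rescale_rescaleImage (h : J ≤ I) (x : ℝ) :
    rescale J (rescaleImage I K J h) x = rescale I K x := by
  obtain ⟨hl, h1, -⟩ := le_iff_nat.1 h
  obtain ⟨d, hJ⟩ := Nat.exists_eq_add_of_le hl
  rw [hJ, Nat.add_sub_cancel_left] at h1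
  have hexp : ((I.level + d : ℕ) : ℤ) - (K.level + d : ℕ) = (I.level : ℤ) - K.level := by
    push_cast
    ring
  have hcast : ((K.index * 2 ^ d + (J.index - I.index * 2 ^ d) : ℕ) : ℝ) =
      K.index * 2 ^ d + (J.index - I.index * 2 ^ d) := by
    push_cast [h1]
    ring
  simp only [rescale, rescaleImage, left, hJ, Nat.add_sub_cancel_left]
  rw [hexp, hcast, zpow_sub₀ two_ne_zero, zpow_natCast, zpow_natCast, pow_add, pow_add]
  field_simp
  ring

lemma mem_rescaleImage_iff (h : J ≤ I) : x ∈ rescaleImage I K J h ↔ rescale K I x ∈ J := by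
  constructor
  · intro hx
    have hy := rescale_mem J hx
    rwa [← rescale_rescale_self K I x, ← rescale_rescaleImage h, rescale_rescale_self] at hy
  · intro hx
    have hy := rescale_mem (rescaleImage I K J h) hx
    rwa [rescale_rescaleImage h, rescale_rescale_self] at hy

lemma rescaleImage_le (h : J ≤ I) : rescaleImage I K J h ≤ K := fun y hy => by
  have := rescale_mem K (h ((mem_rescaleImage_iff h).1 hy))
  rwa [rescale_rescale_self] at this

structure IsPartition {ι : Type*} (D : DyadicInterval) (P : ι → DyadicInterval) : Prop where
  le : ∀ j, P j ≤ D
  pairwiseDisjoint : Pairwise fun j j' => Disjoint (P j : Set ℝ) (P j')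
  exists_mem : ∀ x ∈ D, ∃ j, x ∈ P j

namespace IsPartition

variable {ι : Type*} {P : ι → DyadicInterval}

lemma eq_of_subsingleton [Subsingleton ι] (hP : IsPartition D P) (j : ι) : P j = D :=
  le_antisymm (hP.le j) fun x hx => by
    obtain ⟨j', hj'⟩ := hP.exists_mem x hx
    rwa [Subsingleton.elim j' j] at hj'

lemma lt [Nontrivial ι] (hP : IsPartition D P) (j : ι) : P j < D := by
  refine lt_of_le_of_ne (hP.le j) fun hj => ?_
  obtain ⟨j', hne⟩ := exists_ne j
  have hmem : (P j').left ∈ P j := hj ▸ hP.le j' (P j').left_mem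
  exact (hP.pairwiseDisjoint hne).notMem_of_mem_left (P j').left_mem hmem

lemma exists_le_leftHalf [Nontrivial ι] (hP : IsPartition D P) : ∃ j, P j ≤ D.leftHalf := by
  obtain ⟨j, hj⟩ := hP.exists_mem D.left D.left_mem
  refine ⟨j, (le_leftHalf_or_le_rightHalf (hP.lt j)).resolve_right fun hR => ?_⟩
  have h := (hR hj).1
  rw [← leftHalf_right, ← D.leftHalf_left] at h
  exact h.not_gt D.leftHalf.left_lt_right

lemma cons {n : ℕ} {Q : Fin n → DyadicInterval} (hQ : IsPartition D.rightHalf Q) :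
    IsPartition D (Fin.cons D.leftHalf Q : Fin (n + 1) → DyadicInterval) where
  le j := by
    cases j using Fin.cases with
    | zero => exact D.leftHalf_le
    | succ j => exact (hQ.le j).trans D.rightHalf_le
  pairwiseDisjoint := by
    have hL : ∀ j, Disjoint (D.leftHalf : Set ℝ) (Q j) := fun j =>
      D.disjoint_leftHalf_rightHalf.mono_right (SetLike.coe_subset_coe.2 (hQ.le j))
    intro j j' hne
    cases j using Fin.cases <;> cases j' using Fin.cases
    · exact absurd rfl hne
    · simpa using hL _
    · simpa using (hL _).symm
    · simpa using hQ.pairwiseDisjoint fun h => hne (by rw [h])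
  exists_mem x hx := by
    rcases mem_leftHalf_or_mem_rightHalf hx with h | h
    · exact ⟨0, by simpa using h⟩
    · obtain ⟨j, hj⟩ := hQ.exists_mem x h
      exact ⟨j.succ, by simpa using hj⟩

lemma succAbove {n : ℕ} {P : Fin (n + 1) → DyadicInterval} {j₀ : Fin (n + 1)}
    (hP : IsPartition D P) (h₀ : P j₀ = D.leftHalf) :
    IsPartition D.rightHalf fun t => P (j₀.succAbove t) where
  le t := le_rightHalf_of_disjoint_leftHalf (hP.le _)
    (h₀ ▸ hP.pairwiseDisjoint (Fin.succAbove_ne j₀ t))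
  pairwiseDisjoint t t' hne := hP.pairwiseDisjoint (Fin.succAbove_right_injective.ne hne)
  exists_mem x hx := by
    obtain ⟨j, hj⟩ := hP.exists_mem x (D.rightHalf_le hx)
    have hne : j ≠ j₀ := by
      rintro rfl
      rw [h₀] at hj
      exact D.disjoint_leftHalf_rightHalf.notMem_of_mem_left hj hx
    obtain ⟨t, rfl⟩ := Fin.exists_succAbove_eq hne
    exact ⟨t, hj⟩

lemma injective {κ : Type*} {Q : κ → DyadicInterval} {ρ : ι → κ}
    (hP : IsPartition D fun j => Q (ρ j)) : Function.Injective ρ := by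
  intro j j' h
  by_contra hne
  have hd : Disjoint (Q (ρ j) : Set ℝ) (Q (ρ j')) := hP.pairwiseDisjoint hne
  rw [h] at hd
  exact hd.notMem_of_mem_left (Q (ρ j')).left_mem (Q (ρ j')).left_mem

end IsPartition

def grid (N : ℕ) (j : Fin (2 ^ N)) : DyadicInterval := ⟨N, j, j.isLt⟩

lemma isPartition_grid (N : ℕ) : IsPartition ⊤ (grid N) where
  le _ := le_top
  pairwiseDisjoint j j' hne :=
    (le_or_disjoint (I := grid N j) (J := grid N j') le_rfl).resolve_left fun h =>
      hne (Fin.ext (congrArg index (eq_of_le_of_level_le h le_rfl)))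
  exists_mem x hx := by
    obtain ⟨hx0, hx1⟩ := mem_top.1 hx
    have hpos : (0 : ℝ) < 2 ^ N := by positivity
    have hfloor : ⌊x * (2 : ℝ) ^ N⌋₊ < 2 ^ N := by
      have : (⌊x * (2 : ℝ) ^ N⌋₊ : ℝ) < 2 ^ N :=
        (Nat.floor_le (mul_nonneg hx0 hpos.le)).trans_lt (by nlinarith)
      exact_mod_cast this
    refine ⟨⟨_, hfloor⟩, ?_, ?_⟩
    · rw [grid, left, div_le_iff₀ hpos]
      exact Nat.floor_le (by positivity)
    · rw [grid, right, lt_div_iff₀ hpos]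
      exact Nat.lt_floor_add_one _

lemma exists_le_grid (h : N ≤ I.level) : ∃ j, I ≤ grid N j := by
  have hd : 0 < 2 ^ (I.level - N) := by positivity
  have hq : I.index / 2 ^ (I.level - N) < 2 ^ N := by
    apply Nat.div_lt_of_lt_mul
    rw [← pow_add, Nat.sub_add_cancel h]
    exact I.index_lt
  refine ⟨⟨_, hq⟩, le_iff_nat.2 ⟨h, Nat.div_mul_le_self _ _, ?_⟩⟩
  rw [mul_comm]
  exact Nat.lt_mul_div_succ _ hd

/-- The dyadic interval `[1 - 2⁻ˢ, 1)`. -/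
def tail (s : ℕ) : DyadicInterval := ⟨s, 2 ^ s - 1, Nat.sub_lt (by positivity) one_pos⟩

lemma rightHalf_tail (s : ℕ) : (tail s).rightHalf = tail (s + 1) := by
  have := Nat.one_le_two_pow (n := s)
  ext
  · rfl
  · simp only [rightHalf, tail, pow_succ]
    omega

/-- The partition of `tail s` into the pieces `[1 - 2⁻⁽ˢ⁺ᵏ⁾, 1 - 2⁻⁽ˢ⁺ᵏ⁺¹⁾)`, `k < r`,
and `[1 - 2⁻⁽ˢ⁺ʳ⁾, 1)`. -/
def comb : ℕ → (r : ℕ) → Fin (r + 1) → DyadicInterval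
  | s, 0 => fun _ => tail s
  | s, r + 1 => Fin.cons (tail s).leftHalf (comb (s + 1) r)

lemma isPartition_comb (r : ℕ) : ∀ s, IsPartition (tail s) (comb s r) := by
  induction r with
  | zero =>
    exact fun s => ⟨fun _ => le_rfl,
      fun j j' hne => absurd (Subsingleton.elim (α := Fin 1) j j') hne, fun _ hx => ⟨0, hx⟩⟩
  | succ r ih =>
    intro s
    have h := ih (s + 1)
    rw [← rightHalf_tail] at h
    exact h.cons

end DyadicInterval

open DyadicInterval

def MapsAffinely (f : Equiv.Perm UnitIco) (I K : DyadicInterval) : Prop :=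
  ∀ t : UnitIco, (t : ℝ) ∈ I → (f t : ℝ) = rescale I K t

namespace MapsAffinely

variable {f g : Equiv.Perm UnitIco} {I J K : DyadicInterval}

lemma mem (h : MapsAffinely f I K) {t : UnitIco} (ht : (t : ℝ) ∈ I) : (f t : ℝ) ∈ K := by
  rw [h t ht]
  exact rescale_mem K ht

lemma mul (hg : MapsAffinely g I J) (hf : MapsAffinely f J K) : MapsAffinely (f * g) I K :=
  fun t ht => by rw [Equiv.Perm.mul_apply, hf _ (hg.mem ht), hg t ht, rescale_rescale]

lemma inv (h : MapsAffinely f I K) : MapsAffinely f⁻¹ K I := fun y hy => by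
  set t : UnitIco := ⟨rescale K I y, mem_Ico (rescale_mem I hy)⟩
  have hft : f t = y := Subtype.ext (by rw [h t (rescale_mem I hy), rescale_rescale_self])
  have : f⁻¹ y = t := by rw [Equiv.Perm.inv_eq_iff_eq, hft]
  rw [this]

lemma restrict (h : MapsAffinely f I K) (hJ : J ≤ I) :
    MapsAffinely f J (rescaleImage I K J hJ) := fun t ht => by
  rw [h t (hJ ht), rescale_rescaleImage]

lemma of_forall_apply_eq (h : ∀ t : UnitIco, (t : ℝ) ∈ I → f t = t) : MapsAffinely f I I :=
  fun t ht => by rw [h t ht, rescale_self]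

lemma one : MapsAffinely 1 I I := of_forall_apply_eq fun _ _ => rfl

end MapsAffinely

namespace DyadicInterval.IsPartition

variable {ι : Type*} {D : DyadicInterval} {P Q : ι → DyadicInterval} {f g : Equiv.Perm UnitIco}

lemma map (hP : IsPartition D P) (hf : ∀ j, MapsAffinely f (P j) (Q j))
    (hfix : ∀ t : UnitIco, (t : ℝ) ∉ D → f t = t) : IsPartition D Q := by
  have hinv : ∀ t : UnitIco, (t : ℝ) ∈ D ↔ (f⁻¹ t : ℝ) ∈ D := fun t => by
    constructor
    · intro ht
      by_contra h
      have := hfix _ h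
      rw [Equiv.Perm.coe_inv, Equiv.apply_symm_apply] at this
      rw [Equiv.Perm.coe_inv, ← this] at h
      exact h ht
    · intro ht
      by_contra h
      have : f⁻¹ t = t := by rw [Equiv.Perm.inv_eq_iff_eq, hfix t h]
      exact h (this ▸ ht)
  refine ⟨fun j y hy => ?_, fun j j' hne => Set.disjoint_left.2 fun y hy hy' => ?_,
    fun y hy => ?_⟩
  · exact (hinv ⟨y, mem_Ico hy⟩).2 (hP.le j ((hf j).inv.mem (t := ⟨y, mem_Ico hy⟩) hy))
  · exact (hP.pairwiseDisjoint hne).notMem_of_mem_left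
      ((hf j).inv.mem (t := ⟨y, mem_Ico hy⟩) hy) ((hf j').inv.mem (t := ⟨y, mem_Ico hy⟩) hy')
  · obtain ⟨j, hj⟩ := hP.exists_mem _ ((hinv ⟨y, mem_Ico hy⟩).1 hy)
    exact ⟨j, by simpa using (hf j).mem hj⟩

lemma map_top (hP : IsPartition ⊤ P) (hf : ∀ j, MapsAffinely f (P j) (Q j)) :
    IsPartition ⊤ Q :=
  hP.map hf fun t ht => absurd (mem_top.2 t.2) ht

lemma eq_of_mapsAffinely (hP : IsPartition ⊤ P) (hf : ∀ j, MapsAffinely f (P j) (Q j))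
    (hg : ∀ j, MapsAffinely g (P j) (Q j)) : f = g :=
  Equiv.ext fun t => by
    obtain ⟨j, hj⟩ := hP.exists_mem t (mem_top.2 t.2)
    exact Subtype.ext ((hf j t hj).trans (hg j t hj).symm)

end DyadicInterval.IsPartition

def AffineOnGrid (f : Equiv.Perm UnitIco) (N : ℕ) : Prop :=
  ∀ j, ∃ K, MapsAffinely f (grid N j) K

namespace AffineOnGrid

variable {f g : Equiv.Perm UnitIco} {N N' : ℕ} {J : DyadicInterval}

lemma exists_mapsAffinely (hf : AffineOnGrid f N) (hJ : N ≤ J.level) :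
    ∃ K, MapsAffinely f J K ∧ J.level - N ≤ K.level := by
  obtain ⟨j, hj⟩ := exists_le_grid hJ
  obtain ⟨K, hK⟩ := hf j
  exact ⟨_, hK.restrict hj, Nat.le_add_left _ _⟩

lemma mul (hf : AffineOnGrid f N) (hg : AffineOnGrid g N') : AffineOnGrid (f * g) (N' + N) :=
  fun j => by
    obtain ⟨K, hgK, hK⟩ := hg.exists_mapsAffinely (J := grid (N' + N) j) (Nat.le_add_right _ _)
    obtain ⟨K', hfK', -⟩ := hf.exists_mapsAffinely (J := K) (by simp only [grid] at hK; omega)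
    exact ⟨K', hgK.mul hfK'⟩

lemma inv (hf : AffineOnGrid f N) : ∃ M, AffineOnGrid f⁻¹ M := by
  choose K hK using hf
  refine ⟨Finset.univ.sup fun j => (K j).level, fun j' => ?_⟩
  set y : UnitIco := ⟨(grid _ j').left, mem_Ico (left_mem _)⟩
  obtain ⟨j, hj⟩ := (isPartition_grid N).exists_mem _ (mem_top.2 (f⁻¹ y).2)
  have hy : (y : ℝ) ∈ K j := by simpa using (hK j).mem hj
  have hle : grid _ j' ≤ K j :=
    (le_or_disjoint (Finset.le_sup (f := fun j => (K j).level) (Finset.mem_univ j))).resolve_right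
      (Set.not_disjoint_iff.2 ⟨_, left_mem _, hy⟩)
  exact ⟨_, (hK j).inv.restrict hle⟩

lemma one : AffineOnGrid 1 0 := fun _ => ⟨_, MapsAffinely.one⟩

end AffineOnGrid

lemma isDyadic_natCast_div (a N : ℕ) : IsDyadic ((a : ℝ) / 2 ^ N) :=
  ⟨a, N, by push_cast; ring⟩

lemma AffineOnGrid.isThompsonV {f : Equiv.Perm UnitIco} {N : ℕ} (hf : AffineOnGrid f N) :
    IsThompsonV f := by
  choose K hK using hf
  refine ⟨2 ^ N, fun k => (k : ℕ) / 2 ^ N, fun k => (N : ℤ) - (K k).level,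
    fun k => (K k).left - 2 ^ ((N : ℤ) - (K k).level) * ((k : ℕ) / 2 ^ N),
    by simp, by simp,
    fun a b hab => div_lt_div_of_pos_right (by exact_mod_cast hab) (by positivity),
    fun k => isDyadic_natCast_div _ _, fun k => ⟨(K k).index - k, (K k).level, ?_⟩,
    fun k t ht1 ht2 => ?_⟩
  · show (K k).left - (2 : ℝ) ^ ((N : ℤ) - (K k).level) * (((k : ℕ) : ℝ) / 2 ^ N) = _
    rw [zpow_sub₀ two_ne_zero, zpow_natCast, zpow_natCast, left]
    push_cast
    field_simp
  · have hmem : (t : ℝ) ∈ grid N k := by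
      refine ⟨by simpa [grid, left] using ht1, ?_⟩
      simpa [grid, right] using ht2
    rw [hK k t hmem, rescale]
    simp only [grid, left]
    ring

lemma IsDyadic.exists_forall_le {a : ℝ} (h : IsDyadic a) :
    ∃ n : ℕ, ∀ e : ℤ, n ≤ e → ∃ z : ℤ, a * 2 ^ e = z := by
  obtain ⟨z, n, rfl⟩ := h
  refine ⟨n, fun e he => ?_⟩
  obtain ⟨k, rfl⟩ : ∃ k : ℕ, e = n + k := ⟨(e - n).toNat, by omega⟩
  refine ⟨z * 2 ^ k, ?_⟩
  rw [zpow_add₀ two_ne_zero, zpow_natCast, zpow_natCast]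
  push_cast
  field_simp

lemma exists_castSucc_le_lt {n : ℕ} (x : Fin (n + 1) → ℝ) {p : ℝ} (h0 : x 0 ≤ p)
    (h1 : p < x (Fin.last n)) : ∃ k : Fin n, x k.castSucc ≤ p ∧ p < x k.succ := by
  induction n with
  | zero => exact absurd h0 (not_le.2 h1)
  | succ n ih =>
    by_cases hp : p < x (Fin.last n).castSucc
    · obtain ⟨k, hk⟩ := ih (fun k => x k.castSucc) h0 hp
      exact ⟨k.castSucc, hk⟩
    · exact ⟨Fin.last n, not_lt.1 hp, h1⟩

lemma affine_le_of_forall_lt {s a b c : ℝ} (hs : 0 < s) (hab : a < b)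
    (h : ∀ t, a ≤ t → t < b → s * t + c < 1) : s * b + c ≤ 1 := by
  by_contra! hb
  set t₀ := (1 - c) / s
  have ht₀ : s * t₀ + c = 1 := by
    rw [show s * t₀ = 1 - c by simp only [t₀]; field_simp]
    ring
  have ht₀b : t₀ < b := by rw [div_lt_iff₀ hs]; linarith
  have := h (max a t₀) (le_max_left _ _) (max_lt hab ht₀b)
  nlinarith [le_max_right a t₀]

namespace DyadicInterval

lemma exists_level_left_eq (d : ℕ) {a : ℝ} {n : ℤ} (hn : a * 2 ^ d = n) (h0 : 0 ≤ a)
    (h1 : a + 2 ^ (-(d : ℤ)) ≤ 1) : ∃ K : DyadicInterval, K.level = d ∧ K.left = a := by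
  have hpos : (0 : ℝ) < 2 ^ d := by positivity
  have hn0 : 0 ≤ n := by exact_mod_cast hn ▸ mul_nonneg h0 hpos.le
  have hn1 : n + 1 ≤ 2 ^ d := by
    rw [zpow_neg, zpow_natCast] at h1
    have : (n : ℝ) + 1 ≤ 2 ^ d := by
      rw [← hn]
      calc a * 2 ^ d + 1 = (a + (2 ^ d)⁻¹) * 2 ^ d := by field_simp
        _ ≤ 1 * 2 ^ d := by gcongr
        _ = 2 ^ d := one_mul _
    exact_mod_cast this
  have : n + 1 ≤ ((2 ^ d : ℕ) : ℤ) := by exact_mod_cast hn1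
  refine ⟨⟨d, n.toNat, by omega⟩, rfl, ?_⟩
  rw [left, div_eq_iff hpos.ne', hn]
  exact_mod_cast Int.toNat_of_nonneg hn0

lemma image_bounds_of_eq_affine {f : Equiv.Perm UnitIco} (I : DyadicInterval) {m : ℤ} {c : ℝ}
    (hf : ∀ t : UnitIco, (t : ℝ) ∈ I → (f t : ℝ) = 2 ^ m * t + c) :
    0 ≤ 2 ^ m * I.left + c ∧ 2 ^ m * I.right + c ≤ 1 := by
  have hval : ∀ t, I.left ≤ t → t < I.right → 0 ≤ 2 ^ m * t + c ∧ 2 ^ m * t + c < 1 :=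
    fun t ht1 ht2 => by
      have ht := mem_Ico (I := I) ⟨ht1, ht2⟩
      rw [← hf ⟨t, ht⟩ ⟨ht1, ht2⟩]
      exact (f ⟨t, ht⟩).2
  exact ⟨(hval _ le_rfl I.left_lt_right).1,
    affine_le_of_forall_lt (by positivity) I.left_lt_right fun t ht1 ht2 => (hval t ht1 ht2).2⟩

lemma exists_mapsAffinely_of_eq_affine {f : Equiv.Perm UnitIco} (I : DyadicInterval) {m : ℤ}
    {c : ℝ} (hc : ∃ z : ℤ, c * 2 ^ ((I.level : ℤ) - m) = z)
    (hf : ∀ t : UnitIco, (t : ℝ) ∈ I → (f t : ℝ) = 2 ^ m * t + c) : ∃ K, MapsAffinely f I K := by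
  obtain ⟨hleft, hright⟩ := image_bounds_of_eq_affine I hf
  have hlen : 2 ^ m * (I.right - I.left) = (2 : ℝ) ^ (m - I.level) := by
    rw [right_sub_left, ← zpow_add₀ two_ne_zero, sub_eq_add_neg]
  have hm : m ≤ I.level := by
    have : (2 : ℝ) ^ (m - I.level) ≤ 2 ^ (0 : ℤ) := by rw [zpow_zero, ← hlen]; linarith
    have := (zpow_le_zpow_iff_right₀ (by norm_num : (1 : ℝ) < 2)).1 this
    omega
  obtain ⟨z, hz⟩ := hc
  have hd : (((I.level : ℤ) - m).toNat : ℤ) = I.level - m := Int.toNat_of_nonneg (by omega)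
  have hexp : (2 : ℝ) ^ (((I.level : ℤ) - m).toNat) = 2 ^ ((I.level : ℤ) - m) := by
    rw [← zpow_natCast, hd]
  obtain ⟨K, hKlevel, hKleft⟩ := exists_level_left_eq ((I.level : ℤ) - m).toNat
    (a := 2 ^ m * I.left + c) (n := I.index + z) (by
      have h2 : (2 : ℝ) ^ m * 2 ^ ((I.level : ℤ) - m) = 2 ^ I.level := by
        rw [← zpow_add₀ two_ne_zero, add_sub_cancel, zpow_natCast]
      have hl : I.left * 2 ^ I.level = I.index := by rw [left]; field_simp
      rw [hexp]
      push_cast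
      linear_combination I.left * h2 + hl + hz) hleft (by
      rw [hd, neg_sub, ← hlen]
      linarith)
  refine ⟨K, fun t ht => ?_⟩
  rw [hf t ht, rescale, hKleft, hKlevel, hd, sub_sub_cancel]
  ring

lemma right_le_of_left_lt {I : DyadicInterval} {y : ℝ} {z : ℤ} (hz : y * 2 ^ I.level = z)
    (h : I.left < y) : I.right ≤ y := by
  have hpos : (0 : ℝ) < 2 ^ I.level := by positivity
  rw [left, div_lt_iff₀ hpos, hz] at h
  have : (I.index : ℤ) + 1 ≤ z := Int.add_one_le_of_lt (by exact_mod_cast h)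
  rw [right, div_le_iff₀ hpos, hz]
  exact_mod_cast this

end DyadicInterval

lemma IsThompsonV.exists_affineOnGrid {f : Equiv.Perm UnitIco} (hf : IsThompsonV f) :
    ∃ N, AffineOnGrid f N := by
  obtain ⟨n, x, m, c, h0, h1, -, hx, hc, hpiece⟩ := hf
  choose ex hex using fun k => (hx k).exists_forall_le
  choose ec hec using fun k => (hc k).exists_forall_le
  set N := Finset.univ.sup ex + Finset.univ.sup fun k => (ec k + m k).toNat
  have hexN : ∀ k, ex k ≤ N := fun k =>
    (Finset.le_sup (Finset.mem_univ k)).trans (Nat.le_add_right _ _)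
  have hecN : ∀ k, ec k + m k ≤ N := fun k => by
    have := Finset.le_sup (f := fun k => (ec k + m k).toNat) (Finset.mem_univ k)
    omega
  refine ⟨N, fun j => ?_⟩
  obtain ⟨k, hk0, hk1⟩ := exists_castSucc_le_lt x (p := (grid N j).left)
    (h0 ▸ left_nonneg _) (h1 ▸ (grid N j).left_lt_one)
  obtain ⟨z, hz⟩ := hex k.succ N (by exact_mod_cast hexN k.succ)
  rw [zpow_natCast] at hz
  have hright := right_le_of_left_lt hz hk1
  exact exists_mapsAffinely_of_eq_affine _ (hec k _ (by have := hecN k; simp only [grid]; omega))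
    fun t ht => hpiece k t (hk0.trans ht.1) (ht.2.trans_le hright)

def thompsonV : Subgroup (Equiv.Perm UnitIco) where
  carrier := {f | IsThompsonV f}
  mul_mem' hf hg := by
    obtain ⟨N, hf⟩ := hf.exists_affineOnGrid
    obtain ⟨N', hg⟩ := hg.exists_affineOnGrid
    exact (hf.mul hg).isThompsonV
  one_mem' := AffineOnGrid.one.isThompsonV
  inv_mem' hf := by
    obtain ⟨N, hf⟩ := hf.exists_affineOnGrid
    obtain ⟨M, hM⟩ := hf.inv
    exact hM.isThompsonV

namespace DyadicInterval

variable {J K M X : DyadicInterval} {x : ℝ}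

lemma rescaleImage_leftHalf (J K : DyadicInterval) :
    rescaleImage J K J.leftHalf J.leftHalf_le = K.leftHalf := by
  ext
  · simp only [rescaleImage, leftHalf]
    omega
  · simp only [rescaleImage, leftHalf, Nat.add_sub_cancel_left, pow_one]
    omega

lemma rescaleImage_rightHalf (J K : DyadicInterval) :
    rescaleImage J K J.rightHalf J.rightHalf_le = K.rightHalf := by
  ext
  · simp only [rescaleImage, rightHalf]
    omega
  · simp only [rescaleImage, rightHalf, Nat.add_sub_cancel_left, pow_one]
    omega

lemma rescale_leftHalf (J K : DyadicInterval) (x : ℝ) :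
    rescale J.leftHalf K.leftHalf x = rescale J K x := by
  rw [← rescaleImage_leftHalf J K, rescale_rescaleImage]

lemma rescale_rightHalf (J K : DyadicInterval) (x : ℝ) :
    rescale J.rightHalf K.rightHalf x = rescale J K x := by
  rw [← rescaleImage_rightHalf J K, rescale_rescaleImage]

noncomputable def swapFun (J K : DyadicInterval) (x : ℝ) : ℝ :=
  open Classical in
  if x ∈ J then rescale J K x else if x ∈ K then rescale K J x else x

lemma swapFun_of_mem_left (hx : x ∈ J) : swapFun J K x = rescale J K x := if_pos hx

lemma swapFun_of_mem_right (hd : Disjoint (J : Set ℝ) K) (hx : x ∈ K) :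
    swapFun J K x = rescale K J x := by
  rw [swapFun, if_neg (show x ∉ J from hd.notMem_of_mem_right hx), if_pos hx]

lemma swapFun_of_notMem (hJ : x ∉ J) (hK : x ∉ K) : swapFun J K x = x := by
  rw [swapFun, if_neg hJ, if_neg hK]

lemma swapFun_involutive (hd : Disjoint (J : Set ℝ) K) : Function.Involutive (swapFun J K) := by
  intro x
  by_cases hJ : x ∈ J
  · rw [swapFun_of_mem_left hJ, swapFun_of_mem_right hd (rescale_mem K hJ), rescale_rescale_self]
  by_cases hK : x ∈ K
  · rw [swapFun_of_mem_right hd hK, swapFun_of_mem_left (rescale_mem J hK), rescale_rescale_self]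
  rw [swapFun_of_notMem hJ hK, swapFun_of_notMem hJ hK]

lemma swapFun_mem_Ico (hx : x ∈ Set.Ico (0 : ℝ) 1) : swapFun J K x ∈ Set.Ico (0 : ℝ) 1 := by
  unfold swapFun
  split_ifs with hJ hK
  exacts [mem_Ico (rescale_mem K hJ), mem_Ico (rescale_mem J hK), hx]

noncomputable def swap (J K : DyadicInterval) (hd : Disjoint (J : Set ℝ) K) : Equiv.Perm UnitIco :=
  Function.Involutive.toPerm (fun t => ⟨swapFun J K t, swapFun_mem_Ico t.2⟩)
    fun t => Subtype.ext (swapFun_involutive hd t)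

lemma coe_swap_apply (hd : Disjoint (J : Set ℝ) K) (t : UnitIco) :
    (swap J K hd t : ℝ) = swapFun J K t :=
  rfl

lemma swap_mul_self (hd : Disjoint (J : Set ℝ) K) : swap J K hd * swap J K hd = 1 :=
  Equiv.ext fun t => Subtype.ext (swapFun_involutive hd t)

lemma swap_comm (hd : Disjoint (J : Set ℝ) K) : swap J K hd = swap K J hd.symm := by
  ext t
  simp only [coe_swap_apply]
  by_cases hJ : (t : ℝ) ∈ J
  · rw [swapFun_of_mem_left hJ, swapFun_of_mem_right hd.symm hJ]
  by_cases hK : (t : ℝ) ∈ K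
  · rw [swapFun_of_mem_right hd hK, swapFun_of_mem_left hK]
  rw [swapFun_of_notMem hJ hK, swapFun_of_notMem hK hJ]

lemma swap_apply_of_notMem (hd : Disjoint (J : Set ℝ) K) {t : UnitIco} (hJ : (t : ℝ) ∉ J)
    (hK : (t : ℝ) ∉ K) : swap J K hd t = t :=
  Subtype.ext (swapFun_of_notMem hJ hK)

lemma mapsAffinely_swap_left (hd : Disjoint (J : Set ℝ) K) : MapsAffinely (swap J K hd) J K :=
  fun _ ht => swapFun_of_mem_left ht

lemma mapsAffinely_swap_right (hd : Disjoint (J : Set ℝ) K) : MapsAffinely (swap J K hd) K J :=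
  fun _ ht => swapFun_of_mem_right hd ht

lemma mapsAffinely_swap_of_disjoint (hd : Disjoint (J : Set ℝ) K) (hJ : Disjoint (X : Set ℝ) J)
    (hK : Disjoint (X : Set ℝ) K) :
    MapsAffinely (swap J K hd) X X :=
  MapsAffinely.of_forall_apply_eq fun _ ht =>
    swap_apply_of_notMem hd (hJ.notMem_of_mem_left ht) (hK.notMem_of_mem_left ht)

lemma affineOnGrid_swap (hd : Disjoint (J : Set ℝ) K) :
    AffineOnGrid (swap J K hd) (max J.level K.level) := by
  intro j
  rcases le_or_disjoint (I := grid _ j) (J := J) (le_max_left _ _) with hJ | hJ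
  · exact ⟨_, (mapsAffinely_swap_left hd).restrict hJ⟩
  rcases le_or_disjoint (I := grid _ j) (J := K) (le_max_right _ _) with hK | hK
  · exact ⟨_, (mapsAffinely_swap_right hd).restrict hK⟩
  exact ⟨_, mapsAffinely_swap_of_disjoint hd hJ hK⟩

lemma swap_mem_thompsonV (hd : Disjoint (J : Set ℝ) K) : swap J K hd ∈ thompsonV :=
  (affineOnGrid_swap hd).isThompsonV

lemma swap_apply_of_notMem_of_le (hd : Disjoint (J : Set ℝ) K) {t : UnitIco} (hJ : J ≤ M)
    (hK : K ≤ M) (ht : (t : ℝ) ∉ M) :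
    swap J K hd t = t :=
  swap_apply_of_notMem hd (fun h => ht (hJ h)) (fun h => ht (hK h))

lemma swap_eq_mul_swap_halves (hd : Disjoint (J : Set ℝ) K) :
    swap J K hd = swap J.leftHalf K.leftHalf (hd.mono J.leftHalf_le K.leftHalf_le) *
      swap J.rightHalf K.rightHalf (hd.mono J.rightHalf_le K.rightHalf_le) := by
  have hJ := J.disjoint_leftHalf_rightHalf
  have hK := K.disjoint_leftHalf_rightHalf
  ext t
  simp only [Equiv.Perm.mul_apply, coe_swap_apply]
  set x := (t : ℝ)
  by_cases hxJ : x ∈ J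
  · rw [swapFun_of_mem_left hxJ]
    rcases mem_leftHalf_or_mem_rightHalf hxJ with h | h
    · rw [swapFun_of_notMem (hJ.notMem_of_mem_left h)
        (fun h' => hd.notMem_of_mem_left hxJ (K.rightHalf_le h')),
        swapFun_of_mem_left h, rescale_leftHalf]
    · have hy := rescale_mem K.rightHalf h
      rw [swapFun_of_mem_left h,
        swapFun_of_notMem (fun h' => hd.notMem_of_mem_right (K.rightHalf_le hy) (J.leftHalf_le h'))
        (hK.notMem_of_mem_right hy), rescale_rightHalf]
  by_cases hxK : x ∈ K
  · rw [swapFun_of_mem_right hd hxK]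
    rcases mem_leftHalf_or_mem_rightHalf hxK with h | h
    · rw [swapFun_of_notMem (fun h' => hxJ (J.rightHalf_le h')) (hK.notMem_of_mem_left h),
        swapFun_of_mem_right (hd.mono J.leftHalf_le K.leftHalf_le) h, rescale_leftHalf]
    · have hy := rescale_mem J.rightHalf h
      rw [swapFun_of_mem_right (hd.mono J.rightHalf_le K.rightHalf_le) h,
        swapFun_of_notMem (hJ.notMem_of_mem_right hy)
        (fun h' => hd.notMem_of_mem_left (J.rightHalf_le hy) (K.leftHalf_le h')),
        rescale_rightHalf]
  rw [swapFun_of_notMem hxJ hxK, swapFun_of_notMem (fun h => hxJ (J.rightHalf_le h))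
    (fun h => hxK (K.rightHalf_le h)), swapFun_of_notMem (fun h => hxJ (J.leftHalf_le h))
    (fun h => hxK (K.leftHalf_le h))]

lemma swap_eq_swap_mul_swap_mul_swap (hJK : Disjoint (J : Set ℝ) K)
    (hJM : Disjoint (J : Set ℝ) M) (hKM : Disjoint (K : Set ℝ) M) :
    swap J K hJK = swap K M hKM * swap J M hJM * swap K M hKM := by
  ext t
  simp only [Equiv.Perm.mul_apply, coe_swap_apply]
  set x := (t : ℝ)
  by_cases hxJ : x ∈ J
  · have hy := rescale_mem M hxJ
    rw [swapFun_of_mem_left hxJ, swapFun_of_notMem (hJK.notMem_of_mem_left hxJ)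
      (hJM.notMem_of_mem_left hxJ), swapFun_of_mem_left hxJ, swapFun_of_mem_right hKM hy,
      rescale_rescale]
  by_cases hxK : x ∈ K
  · have hy := rescale_mem J hxK
    rw [swapFun_of_mem_right hJK hxK, swapFun_of_mem_left hxK,
      swapFun_of_mem_right hJM (rescale_mem M hxK), rescale_rescale,
      swapFun_of_notMem (hJK.notMem_of_mem_left hy) (hJM.notMem_of_mem_left hy)]
  by_cases hxM : x ∈ M
  · have hy := rescale_mem K hxM
    rw [swapFun_of_notMem hxJ hxK, swapFun_of_mem_right hKM hxM,
      swapFun_of_notMem (hJK.notMem_of_mem_right hy) (hKM.notMem_of_mem_left hy),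
      swapFun_of_mem_left hy, rescale_rescale_self]
  rw [swapFun_of_notMem hxJ hxK, swapFun_of_notMem hxK hxM, swapFun_of_notMem hxJ hxM,
    swapFun_of_notMem hxK hxM]

end DyadicInterval

def stabilizerClosure (i : ℕ) : Subgroup (Equiv.Perm UnitIco) :=
  Subgroup.closure (GThompson i ∪ {f | IsThompsonV f ∧
    ∀ t : UnitIco, 1 / 2 ^ (i + 1) ≤ (t : ℝ) → (t : ℝ) < 1 / 2 ^ i → f t = t})

lemma stabilizerClosure_le_thompsonV (i : ℕ) : stabilizerClosure i ≤ thompsonV :=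
  (Subgroup.closure_le _).2 (Set.union_subset (fun _ hf => hf.1) fun _ hf => hf.1)

namespace DyadicInterval

/-- The interval `[0, 2⁻ⁿ)`. -/
def initial (n : ℕ) : DyadicInterval := ⟨n, 0, Nat.two_pow_pos n⟩

variable {i : ℕ} {J K : DyadicInterval} {x : ℝ}

lemma mem_leftHalf_initial : x ∈ (initial i).leftHalf ↔ 0 ≤ x ∧ x < 1 / 2 ^ (i + 1) := by
  simp [mem_def, initial, leftHalf, left, right]

lemma mem_rightHalf_initial : x ∈ (initial i).rightHalf ↔ 1 / 2 ^ (i + 1) ≤ x ∧ x < 1 / 2 ^ i := by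
  have h : (1 + 1 : ℝ) / 2 ^ (i + 1) = 1 / 2 ^ i := by
    rw [pow_succ]
    field_simp
    norm_num
  simp only [mem_def, initial, rightHalf, left, right]
  push_cast
  rw [h]

lemma initial_le_leftHalf_top (hi : 1 ≤ i) : initial i ≤ (⊤ : DyadicInterval).leftHalf :=
  le_iff_nat.2 ⟨hi, by simp [initial, leftHalf],
    by simpa [initial, leftHalf] using Nat.one_le_two_pow⟩

lemma le_or_le_leftHalf_or_le_rightHalf_or_disjoint (I J : DyadicInterval) :
    I ≤ J ∨ J ≤ I.leftHalf ∨ J ≤ I.rightHalf ∨ Disjoint (J : Set ℝ) I := by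
  rcases le_total J.level I.level with h | h
  · rcases le_or_disjoint h with h' | h'
    exacts [Or.inl h', Or.inr (Or.inr (Or.inr h'.symm))]
  rcases le_or_disjoint h with h' | h'
  · rcases h'.lt_or_eq with h' | rfl
    · exact Or.inr ((le_leftHalf_or_le_rightHalf h').imp_right Or.inl)
    · exact Or.inl le_rfl
  · exact Or.inr (Or.inr (Or.inr h'))

lemma swap_mem_of_disjoint_leftHalf_initial (hd : Disjoint (J : Set ℝ) K)
    (hJ : Disjoint (J : Set ℝ) (initial i).leftHalf)
    (hK : Disjoint (K : Set ℝ) (initial i).leftHalf) :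
    swap J K hd ∈ stabilizerClosure i :=
  Subgroup.subset_closure (Or.inl ⟨swap_mem_thompsonV hd, fun t ht => by
    have hA : (t : ℝ) ∈ (initial i).leftHalf := mem_leftHalf_initial.2 ⟨t.2.1, ht⟩
    exact swap_apply_of_notMem hd (hJ.notMem_of_mem_right hA) (hK.notMem_of_mem_right hA)⟩)

lemma swap_mem_of_disjoint_rightHalf_initial (hd : Disjoint (J : Set ℝ) K)
    (hJ : Disjoint (J : Set ℝ) (initial i).rightHalf)
    (hK : Disjoint (K : Set ℝ) (initial i).rightHalf) :
    swap J K hd ∈ stabilizerClosure i :=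
  Subgroup.subset_closure (Or.inr ⟨swap_mem_thompsonV hd, fun t ht₁ ht₂ => by
    have hB : (t : ℝ) ∈ (initial i).rightHalf := mem_rightHalf_initial.2 ⟨ht₁, ht₂⟩
    exact swap_apply_of_notMem hd (hJ.notMem_of_mem_right hB) (hK.notMem_of_mem_right hB)⟩)

/-- Conjugating by swaps with `[1/2, 1)`, which lies outside `[0, 2⁻ⁱ)` because `1 ≤ i`. -/
lemma swap_mem_of_le_leftHalf_initial_of_le_rightHalf_initial (hd : Disjoint (J : Set ℝ) K)
    (hi : 1 ≤ i) (hJ : J ≤ (initial i).leftHalf) (hK : K ≤ (initial i).rightHalf) :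
    swap J K hd ∈ stabilizerClosure i := by
  have hAB := (initial i).disjoint_leftHalf_rightHalf
  have hIC : Disjoint (initial i : Set ℝ) (⊤ : DyadicInterval).rightHalf :=
    (⊤ : DyadicInterval).disjoint_leftHalf_rightHalf.mono_left (initial_le_leftHalf_top hi)
  have hAC : Disjoint ((initial i).leftHalf : Set ℝ) (⊤ : DyadicInterval).rightHalf :=
    hIC.mono_left (initial i).leftHalf_le
  have hBC : Disjoint ((initial i).rightHalf : Set ℝ) (⊤ : DyadicInterval).rightHalf :=
    hIC.mono_left (initial i).rightHalf_le
  rw [swap_eq_swap_mul_swap_mul_swap hd (hAC.mono_left hJ) (hBC.mono_left hK)]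
  have hKC := swap_mem_of_disjoint_leftHalf_initial (hBC.mono_left hK)
    (hAB.symm.mono_left hK) hAC.symm
  exact mul_mem (mul_mem hKC (swap_mem_of_disjoint_rightHalf_initial (hAC.mono_left hJ)
    (hAB.mono_left hJ) hBC.symm)) hKC

lemma swap_mem_of_initial_le (n : ℕ) :
    ∀ (J K : DyadicInterval) (hd : Disjoint (J : Set ℝ) K), initial i ≤ J →
      i = J.level + n → swap J K hd ∈ stabilizerClosure i := by
  have halves : ∀ (J K : DyadicInterval) (hd : Disjoint (J : Set ℝ) K),
      (initial i).leftHalf ≤ J.leftHalf → initial i ≤ J →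
      swap J.leftHalf K.leftHalf (hd.mono J.leftHalf_le K.leftHalf_le) ∈ stabilizerClosure i →
      swap J K hd ∈ stabilizerClosure i := fun J K hd hA hJ hL => by
    rw [swap_eq_mul_swap_halves]
    exact mul_mem hL (swap_mem_of_disjoint_leftHalf_initial _
      (J.disjoint_leftHalf_rightHalf.symm.mono_right hA)
      (hd.symm.mono K.rightHalf_le ((initial i).leftHalf_le.trans hJ)))
  induction n with
  | zero =>
    intro J K hd hJ hn
    obtain rfl : initial i = J := eq_of_le_of_level_le hJ (by simp [initial, hn])
    exact halves _ K hd le_rfl le_rfl (swap_mem_of_disjoint_rightHalf_initial _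
      (initial i).disjoint_leftHalf_rightHalf (hd.symm.mono K.leftHalf_le (initial i).rightHalf_le))
  | succ n ih =>
    intro J K hd hJ hn
    have hlt : initial i < J := lt_of_le_of_ne hJ fun h => by
      rw [← h] at hn
      simp [initial] at hn
    have hJL : initial i ≤ J.leftHalf := by
      refine (le_leftHalf_or_le_rightHalf hlt).resolve_right fun h => ?_
      have h0 := h (initial i).left_mem
      rw [mem_def, ← leftHalf_right] at h0
      have : J.leftHalf.right ≤ 0 := by simpa [initial, left] using h0.1
      linarith [J.leftHalf.left_lt_right, J.leftHalf.left_nonneg]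
    exact halves J K hd ((initial i).leftHalf_le.trans hJL) hJ
      (ih _ _ _ hJL (by simp only [leftHalf]; omega))

theorem swap_mem_stabilizerClosure (hd : Disjoint (J : Set ℝ) K) (hi : 1 ≤ i) :
    swap J K hd ∈ stabilizerClosure i := by
  have hAB := (initial i).disjoint_leftHalf_rightHalf
  rcases le_or_le_leftHalf_or_le_rightHalf_or_disjoint (initial i) J with hJ | hJ
  · exact swap_mem_of_initial_le (i - J.level) J K hd hJ
      (by have := level_le_of_le hJ; simp only [initial] at this; omega)
  rcases le_or_le_leftHalf_or_le_rightHalf_or_disjoint (initial i) K with hK | hK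
  · rw [swap_comm]
    exact swap_mem_of_initial_le (i - K.level) K J hd.symm hK
      (by have := level_le_of_le hK; simp only [initial] at this; omega)
  have classify : ∀ X : DyadicInterval, X ≤ (initial i).leftHalf ∨ X ≤ (initial i).rightHalf ∨
      Disjoint (X : Set ℝ) (initial i) →
      X ≤ (initial i).leftHalf ∧ Disjoint (X : Set ℝ) (initial i).rightHalf ∨
      X ≤ (initial i).rightHalf ∧ Disjoint (X : Set ℝ) (initial i).leftHalf ∨
      Disjoint (X : Set ℝ) (initial i).leftHalf ∧ Disjoint (X : Set ℝ) (initial i).rightHalf :=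
    fun X hX => hX.imp (fun h => ⟨h, hAB.mono_left h⟩) (Or.imp (fun h => ⟨h, hAB.symm.mono_left h⟩)
      fun h => ⟨h.mono_right (initial i).leftHalf_le, h.mono_right (initial i).rightHalf_le⟩)
  rcases classify J hJ with ⟨hJA, hJB⟩ | ⟨hJB, hJA⟩ | ⟨hJA, hJB⟩ <;>
  rcases classify K hK with ⟨hKA, hKB⟩ | ⟨hKB, hKA⟩ | ⟨hKA, hKB⟩ <;>
  first
    | exact swap_mem_of_disjoint_leftHalf_initial hd hJA hKA
    | exact swap_mem_of_disjoint_rightHalf_initial hd hJB hKB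
    | exact swap_mem_of_le_leftHalf_initial_of_le_rightHalf_initial hd hi hJA hKB
    | (rw [swap_comm]; exact swap_mem_of_le_leftHalf_initial_of_le_rightHalf_initial _ hi hKA hJB)

end DyadicInterval

namespace DyadicInterval.IsPartition

variable {ι : Type*} {D : DyadicInterval} {P : ι → DyadicInterval}

lemma comp_equiv {κ : Type*} (hP : IsPartition D P) (e : κ ≃ ι) : IsPartition D (P ∘ e) where
  le _ := hP.le _
  pairwiseDisjoint _ _ hne := hP.pairwiseDisjoint (e.injective.ne hne)
  exists_mem x hx := (hP.exists_mem x hx).imp' e.symm fun j hj => by simpa using hj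

lemma mapsAffinely_swap [DecidableEq ι] (hP : IsPartition D P) {a b : ι} (hab : a ≠ b) (j : ι) :
    MapsAffinely (swap (P a) (P b) (hP.pairwiseDisjoint hab)) (P j) (P (Equiv.swap a b j)) := by
  rcases eq_or_ne j a with rfl | hja
  · rw [Equiv.swap_apply_left]
    exact mapsAffinely_swap_left _
  rcases eq_or_ne j b with rfl | hjb
  · rw [Equiv.swap_apply_right]
    exact mapsAffinely_swap_right _
  rw [Equiv.swap_apply_of_ne_of_ne hja hjb]
  exact mapsAffinely_swap_of_disjoint _ (hP.pairwiseDisjoint hja) (hP.pairwiseDisjoint hjb)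

/-- The piece `P j₀` containing the left end of `D` is moved onto `D.leftHalf`. -/
lemma exists_mapsAffinely_swap_mul_swap [Nontrivial ι] (hP : IsPartition D P) :
    ∃ j₀, ∃ hd : Disjoint (P j₀ : Set ℝ) D.rightHalf, ∃ Q : ι → DyadicInterval,
      Q j₀ = D.leftHalf ∧ ∀ j, MapsAffinely
        (swap D.leftHalf D.rightHalf D.disjoint_leftHalf_rightHalf * swap (P j₀) D.rightHalf hd)
        (P j) (Q j) := by
  obtain ⟨j₀, h₀⟩ := hP.exists_le_leftHalf
  have hLR := D.disjoint_leftHalf_rightHalf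
  have hd : Disjoint (P j₀ : Set ℝ) D.rightHalf := hLR.mono_left h₀
  have key : ∀ j, ∃ Q, MapsAffinely (swap _ _ hLR * swap _ _ hd) (P j) Q ∧
      (j = j₀ → Q = D.leftHalf) := by
    intro j
    by_cases hj : j = j₀
    · subst hj
      exact ⟨_, (mapsAffinely_swap_left hd).mul (mapsAffinely_swap_right hLR), fun _ => rfl⟩
    rcases le_leftHalf_or_le_rightHalf (hP.lt j) with hL | hR
    · exact ⟨_, (mapsAffinely_swap_of_disjoint hd (hP.pairwiseDisjoint hj) (hLR.mono_left hL)).mul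
        ((mapsAffinely_swap_left hLR).restrict hL), fun h => absurd h hj⟩
    · exact ⟨_, ((mapsAffinely_swap_right hd).restrict hR).mul
        ((mapsAffinely_swap_left hLR).restrict ((rescaleImage_le hR).trans h₀)),
        fun h => absurd h hj⟩
  choose Q hQ hQ₀ using key
  exact ⟨j₀, hd, Q, hQ₀ j₀ rfl, hQ⟩

end DyadicInterval.IsPartition

namespace DyadicInterval

variable {i : ℕ}

/-- Induction on the number of pieces: after moving the leftmost piece onto
`(tail s).leftHalf`, the other pieces partition `(tail s).rightHalf = tail (s + 1)`. -/
theorem exists_mem_stabilizerClosure_mapsAffinely_comb (hi : 1 ≤ i) (r : ℕ) :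
    ∀ (s : ℕ) (P : Fin (r + 1) → DyadicInterval), IsPartition (tail s) P →
      ∃ w ∈ stabilizerClosure i, (∀ t : UnitIco, (t : ℝ) ∉ tail s → w t = t) ∧
        ∀ j, ∃ u, MapsAffinely w (P j) (comb s r u) := by
  induction r with
  | zero =>
    intro s P hP
    refine ⟨1, one_mem _, fun _ _ => rfl, fun j => ⟨0, ?_⟩⟩
    rw [hP.eq_of_subsingleton (ι := Fin 1) j]
    exact MapsAffinely.one
  | succ r ih =>
    intro s P hP
    obtain ⟨j₀, hd, Q, hQ₀, hQ⟩ := hP.exists_mapsAffinely_swap_mul_swap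
    have hLR := (tail s).disjoint_leftHalf_rightHalf
    set g := swap _ _ hLR * swap _ _ hd
    have hgfix : ∀ t : UnitIco, (t : ℝ) ∉ tail s → g t = t := fun t ht => by
      rw [Equiv.Perm.mul_apply, swap_apply_of_notMem_of_le _ (hP.le j₀) (rightHalf_le _) ht,
        swap_apply_of_notMem_of_le _ (leftHalf_le _) (rightHalf_le _) ht]
    have hQ' := (hP.map hQ hgfix).succAbove hQ₀
    rw [rightHalf_tail] at hQ'
    obtain ⟨w, hw, hwfix, hwQ⟩ := ih (s + 1) _ hQ'
    refine ⟨w * g, mul_mem hw (mul_mem (swap_mem_stabilizerClosure _ hi)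
      (swap_mem_stabilizerClosure _ hi)), fun t ht => ?_, fun j => ?_⟩
    · rw [Equiv.Perm.mul_apply, hgfix t ht]
      exact hwfix t fun h => ht ((rightHalf_tail s ▸ (tail s).rightHalf_le) h)
    rcases eq_or_ne j j₀ with rfl | hj
    · refine ⟨0, (hQ j).mul ?_⟩
      rw [hQ₀]
      refine MapsAffinely.of_forall_apply_eq fun t ht => hwfix t fun h => ?_
      rw [← rightHalf_tail] at h
      exact hLR.notMem_of_mem_left ht h
    · obtain ⟨t, rfl⟩ := Fin.exists_succAbove_eq hj
      obtain ⟨u, hu⟩ := hwQ t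
      exact ⟨u.succ, (hQ _).mul hu⟩

theorem mem_stabilizerClosure_of_mapsAffinely_comb (hi : 1 ≤ i) {r : ℕ}
    (σ : Equiv.Perm (Fin (r + 1))) :
    ∀ f : Equiv.Perm UnitIco, (∀ t, MapsAffinely f (comb 0 r t) (comb 0 r (σ t))) →
      f ∈ stabilizerClosure i := by
  have hC := isPartition_comb r 0
  induction σ using Equiv.Perm.swap_induction_on with
  | one =>
    intro f hf
    rw [hC.eq_of_mapsAffinely hf fun _ => MapsAffinely.one]
    exact one_mem _
  | swap_mul σ a b hab ih =>
    intro f hf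
    set s := swap _ _ (hC.pairwiseDisjoint hab)
    have hsf : s * f ∈ stabilizerClosure i := ih _ fun t => by
      simpa using (hf t).mul (hC.mapsAffinely_swap hab _)
    rw [← one_mul f, ← swap_mul_self (hC.pairwiseDisjoint hab), mul_assoc]
    exact mul_mem (swap_mem_stabilizerClosure _ hi) hsf

end DyadicInterval

theorem mem_stabilizerClosure_of_isThompsonV {i : ℕ} (hi : 1 ≤ i) {f : Equiv.Perm UnitIco}
    (hf : IsThompsonV f) : f ∈ stabilizerClosure i := by
  obtain ⟨N, hN⟩ := hf.exists_affineOnGrid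
  choose K hK using hN
  obtain ⟨r, hr⟩ : ∃ r, 2 ^ N = r + 1 := ⟨_, (Nat.sub_add_cancel Nat.one_le_two_pow).symm⟩
  have hP := (isPartition_grid N).comp_equiv (finCongr hr).symm
  have hfPQ : ∀ j, MapsAffinely f (grid N ((finCongr hr).symm j)) (K ((finCongr hr).symm j)) :=
    fun j => hK _
  have hQ := hP.map_top hfPQ
  obtain ⟨v, hv, -, hvP⟩ := exists_mem_stabilizerClosure_mapsAffinely_comb hi r 0 _ hP
  obtain ⟨w, hw, -, hwQ⟩ := exists_mem_stabilizerClosure_mapsAffinely_comb hi r 0 _ hQ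
  choose ρ hρ using hvP
  choose π hπ using hwQ
  have bijective : ∀ {τ : Fin (r + 1) → Fin (r + 1)} {u : Equiv.Perm UnitIco}
      {X : Fin (r + 1) → DyadicInterval}, IsPartition ⊤ X →
      (∀ j, MapsAffinely u (X j) (comb 0 r (τ j))) → τ.Bijective := fun hX hu =>
    Finite.injective_iff_bijective.1 (hX.map_top hu).injective
  set eρ := Equiv.ofBijective ρ (bijective hP hρ)
  set eπ := Equiv.ofBijective π (bijective hQ hπ)
  have hwfv : w * f * v⁻¹ ∈ stabilizerClosure i :=
    mem_stabilizerClosure_of_mapsAffinely_comb hi (eρ.symm.trans eπ) _ fun t => by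
      obtain ⟨j, rfl⟩ := eρ.surjective t
      simpa [eρ, eπ, mul_assoc] using ((hρ j).inv.mul (hfPQ j)).mul (hπ j)
  have hf : f = w⁻¹ * (w * f * v⁻¹) * v := by group
  rw [hf]
  exact mul_mem (mul_mem (inv_mem hw) hwfv) hv

/-- Thompson's group `V` is generated by the pointwise stabilizer of
`[0, 1/2^(i+1))` together with the pointwise stabilizer of
`[1/2^(i+1), 1/2^i)`, for every `i ≥ 1`. -/
theorem stmt14 (i : ℕ) (hi : 1 ≤ i) :
    {f | IsThompsonV f} =
      ↑(Subgroup.closure (GThompson i ∪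
        {f | IsThompsonV f ∧
          ∀ t : UnitIco, 1 / 2 ^ (i + 1) ≤ (t : ℝ) → (t : ℝ) < 1 / 2 ^ i → f t = t})) :=
  Set.ext fun _ => ⟨mem_stabilizerClosure_of_isThompsonV hi,
    fun hf => stabilizerClosure_le_thompsonV i hf⟩
end
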